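/- arXiv:2311.15670 — 3 statements merged into one kernel-verified Lean document; each statement's English description precedes it below -/
import Mathlib

section
/- If P1, P2 ∈ SBrSNNI and L ⊆ A_L, then P1 ∥_L P2 ∈ SBrSNNI; likewise P1, P2 ∈ P_BrNDC and L ⊆ A_L imply P1 ∥_L P2 ∈ P_BrNDC; and if P1, P2 ∈ SBrNDC, then P1 ∥_L P2 ∈ SBrNDC for every L ⊆ A (compositionality with respect to parallel composition). -/
namespace SecurityNI

/-- Process terms: `0`, action prefix (`none` = τ, `some a` = observable action),
choice, CSP-style parallel composition with synchronization set, restriction,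
hiding, and constants (whose defining equations are given by an environment). -/
inductive Proc (A : Type) (C : Type) : Type where
  | nil : Proc A C
  | pre : Option A → Proc A C → Proc A C
  | choice : Proc A C → Proc A C → Proc A C
  | par : Set A → Proc A C → Proc A C → Proc A C
  | restrict : Proc A C → Set A → Proc A C
  | hide : Proc A C → Set A → Proc A C
  | const : C → Proc A C

variable {A C : Type}

/-- A process term is guarded when every constant occurrence is in the scope
of an action prefix operator. -/
def Guarded : Proc A C → Prop
  | .nil => True
  | .pre _ _ => True
  | .choice p q => Guarded p ∧ Guarded q
  | .par _ p q => Guarded p ∧ Guarded q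
  | .restrict p _ => Guarded p
  | .hide p _ => Guarded p
  | .const _ => False

/-- Operational semantics, parameterized by the defining equations `env` of
the constants.  Labels are `Option A`, with `none` playing the role of τ. -/
inductive Trans (env : C → Proc A C) : Proc A C → Option A → Proc A C → Prop where
  | pre (a : Option A) (p : Proc A C) : Trans env (.pre a p) a p
  | choiceL {p q a p'} (h : Trans env p a p') : Trans env (.choice p q) a p'
  | choiceR {p q a q'} (h : Trans env q a q') : Trans env (.choice p q) a q'
  | parL {L p q a p'} (h : Trans env p a p') (hn : ∀ x, a = some x → x ∉ L) :
      Trans env (.par L p q) a (.par L p' q)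
  | parR {L p q a q'} (h : Trans env q a q') (hn : ∀ x, a = some x → x ∉ L) :
      Trans env (.par L p q) a (.par L p q')
  | sync {L p q x p' q'} (h1 : Trans env p (some x) p') (h2 : Trans env q (some x) q')
      (hx : x ∈ L) : Trans env (.par L p q) (some x) (.par L p' q')
  | res {p a p' L} (h : Trans env p a p') (hn : ∀ x, a = some x → x ∉ L) :
      Trans env (.restrict p L) a (.restrict p' L)
  | hideIn {p x p' L} (h : Trans env p (some x) p') (hx : x ∈ L) :
      Trans env (.hide p L) none (.hide p' L)
  | hideOut {p a p' L} (h : Trans env p a p') (hn : ∀ x, a = some x → x ∉ L) :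
      Trans env (.hide p L) a (.hide p' L)
  | const {c a p'} (h : Trans env (env c) a p') : Trans env (.const c) a p'

section LTS

variable {S : Type} (tr : S → Option A → S → Prop)

/-- Finitely many (possibly zero) τ-transitions. -/
def TauStar : S → S → Prop :=
  Relation.ReflTransGen (fun s s' => tr s none s')

/-- `B` is a branching bisimulation. -/
def IsBranchingBisim (B : S → S → Prop) : Prop :=
  Symmetric B ∧
    ∀ s1 s2, B s1 s2 → ∀ a s1', tr s1 a s1' →
      (a = none ∧ B s1' s2) ∨
      (∃ s2b s2', TauStar tr s2 s2b ∧ tr s2b a s2' ∧ B s1 s2b ∧ B s1' s2')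

/-- Branching bisimilarity `≈_b`. -/
def BrBisim (s1 s2 : S) : Prop :=
  ∃ B, IsBranchingBisim tr B ∧ B s1 s2

/-- `B` is a weak bisimulation. -/
def IsWeakBisim (B : S → S → Prop) : Prop :=
  Symmetric B ∧
    ∀ s1 s2, B s1 s2 →
      (∀ s1', tr s1 none s1' → ∃ s2', TauStar tr s2 s2' ∧ B s1' s2') ∧
      (∀ x s1', tr s1 (some x) s1' →
        ∃ t t' s2', TauStar tr s2 t ∧ tr t (some x) t' ∧ TauStar tr t' s2' ∧ B s1' s2')

/-- Weak bisimilarity `≈`. -/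
def WeakBisim (s1 s2 : S) : Prop :=
  ∃ B, IsWeakBisim tr B ∧ B s1 s2

/-- Reachability via finitely many transitions. -/
def Reach : S → S → Prop :=
  Relation.ReflTransGen (fun s s' => ∃ a, tr s a s')

lemma rtgLift {α β : Type} {r : α → α → Prop} {p : β → β → Prop} {a b : α} (f : α → β)
    (h : ∀ a b, r a b → p (f a) (f b)) (hab : Relation.ReflTransGen r a b) :
    Relation.ReflTransGen p (f a) (f b) :=
  Relation.ReflTransGen.lift f h _ _ hab

lemma rtgMono {α : Type} {r p : α → α → Prop} {a b : α}
    (h : ∀ a b, r a b → p a b) (hab : Relation.ReflTransGen r a b) :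
    Relation.ReflTransGen p a b :=
  Relation.ReflTransGen.mono h _ _ hab

/-- One-directional semi-branching simulation clause. -/
def Sim (B : S → S → Prop) : Prop :=
  ∀ s1 s2, B s1 s2 → ∀ a s1', tr s1 a s1' →
    (a = none ∧ ∃ s2', TauStar tr s2 s2' ∧ B s1 s2' ∧ B s1' s2') ∨
    (∃ s2b s2', TauStar tr s2 s2b ∧ tr s2b a s2' ∧ B s1 s2b ∧ B s1' s2')

def IsSemiBB (B : S → S → Prop) : Prop := Sim tr B ∧ Sim tr (flip B)

/-- Semi-branching bisimilarity. -/
def SemiBB (s1 s2 : S) : Prop := ∃ B, IsSemiBB tr B ∧ B s1 s2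

variable {tr}

lemma Sim.mono {B B' : S → S → Prop} (h : Sim tr B) (hBB : ∀ x y, B' x y ↔ B x y) :
    Sim tr B' := by
  have : B' = B := by funext x y; exact propext (hBB x y)
  rwa [this]

lemma isSemiBB_of_isBranchingBisim {B : S → S → Prop} (h : IsBranchingBisim tr B) :
    IsSemiBB tr B := by
  obtain ⟨hsym, hcl⟩ := h
  have hs : Sim tr B := by
    intro s1 s2 hB a s1' hstep
    rcases hcl s1 s2 hB a s1' hstep with ⟨rfl, h'⟩ | ⟨s2b, s2', h1, h2, h3, h4⟩
    · exact Or.inl ⟨rfl, s2, Relation.ReflTransGen.refl, hB, h'⟩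
    · exact Or.inr ⟨s2b, s2', h1, h2, h3, h4⟩
  refine ⟨hs, Sim.mono hs fun x y => ⟨fun h' => hsym h', fun h' => hsym h'⟩⟩

lemma brBisim_semiBB {s1 s2 : S} (h : BrBisim tr s1 s2) : SemiBB tr s1 s2 := by
  obtain ⟨B, hB, hmem⟩ := h
  exact ⟨B, isSemiBB_of_isBranchingBisim hB, hmem⟩

lemma semiBB_symm {s1 s2 : S} (h : SemiBB tr s1 s2) : SemiBB tr s2 s1 := by
  obtain ⟨B, ⟨h1, h2⟩, hmem⟩ := h
  exact ⟨flip B, ⟨h2, Sim.mono h1 fun x y => Iff.rfl⟩, hmem⟩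

lemma sim_semiBB : Sim tr (SemiBB tr) := by
  intro s1 s2 h a s1' hstep
  obtain ⟨B, hB, hmem⟩ := h
  rcases hB.1 s1 s2 hmem a s1' hstep with ⟨rfl, s2', ht, hm1, hm2⟩ | ⟨s2b, s2', h1, h2, h3, h4⟩
  · exact Or.inl ⟨rfl, s2', ht, ⟨B, hB, hm1⟩, ⟨B, hB, hm2⟩⟩
  · exact Or.inr ⟨s2b, s2', h1, h2, ⟨B, hB, h3⟩, ⟨B, hB, h4⟩⟩

/-- Follow lemma: the right side can follow τ moves of the left. -/
lemma Sim.follow {B : S → S → Prop} (hS : Sim tr B) {x y x' : S}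
    (hB : B x y) (ht : TauStar tr x x') : ∃ y', TauStar tr y y' ∧ B x' y' := by
  induction ht with
  | refl => exact ⟨y, Relation.ReflTransGen.refl, hB⟩
  | tail _ hstep ih =>
    obtain ⟨ym, hty, hBm⟩ := ih
    rcases hS _ _ hBm _ _ hstep with ⟨_, y2, ht2, _, hB2⟩ | ⟨yb, y2, ht2, hst2, _, hB2⟩
    · exact ⟨y2, hty.trans ht2, hB2⟩
    · exact ⟨y2, (hty.trans ht2).tail hst2, hB2⟩

lemma Sim.comp {B1 B2 : S → S → Prop} (h1 : Sim tr B1) (h2 : Sim tr B2) :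
    Sim tr (fun x z => ∃ y, B1 x y ∧ B2 y z) := by
  intro x z hxz a x' hstep
  obtain ⟨y, hxy, hyz⟩ := hxz
  rcases h1 x y hxy a x' hstep with ⟨rfl, y2, hty, hBy, hBy'⟩ | ⟨yb, y', hty, hsty, hByb, hBy'⟩
  · obtain ⟨z2, htz, hB2⟩ := h2.follow hyz hty
    exact Or.inl ⟨rfl, z2, htz, ⟨y2, hBy, hB2⟩, ⟨y2, hBy', hB2⟩⟩
  · obtain ⟨z0, htz0, hB20⟩ := h2.follow hyz hty
    rcases h2 yb z0 hB20 a y' hsty with ⟨rfl, z2, htz2, hBz, hBz'⟩ | ⟨zb, z', htz2, hstz, hBzb, hBz'⟩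
    · exact Or.inl ⟨rfl, z2, htz0.trans htz2, ⟨yb, hByb, hBz⟩, ⟨y', hBy', hBz'⟩⟩
    · exact Or.inr ⟨zb, z', htz0.trans htz2, hstz, ⟨yb, hByb, hBzb⟩, ⟨y', hBy', hBz'⟩⟩

lemma semiBB_trans {x y z : S} (hxy : SemiBB tr x y) (hyz : SemiBB tr y z) :
    SemiBB tr x z := by
  refine ⟨fun a c => ∃ b, SemiBB tr a b ∧ SemiBB tr b c, ⟨Sim.comp sim_semiBB sim_semiBB, ?_⟩,
    y, hxy, hyz⟩
  refine (Sim.comp sim_semiBB sim_semiBB).mono fun a c => ?_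
  exact ⟨fun ⟨b, h1', h2'⟩ => ⟨b, semiBB_symm h2', semiBB_symm h1'⟩,
         fun ⟨b, h1', h2'⟩ => ⟨b, semiBB_symm h2', semiBB_symm h1'⟩⟩

/-- Stuttering lemma for semi-branching bisimilarity. -/
lemma semiBB_stutter {x z w y : S} (hxy : SemiBB tr x y) (hxz : TauStar tr x z)
    (hzw : TauStar tr z w) (hwy : SemiBB tr w y) : SemiBB tr z y := by
  set R : S → S → Prop := fun p q =>
    SemiBB tr p q ∨ (∃ x0 w0, SemiBB tr x0 q ∧ SemiBB tr w0 q ∧ TauStar tr x0 p ∧ TauStar tr p w0)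
      ∨ (∃ x0 w0, SemiBB tr x0 p ∧ SemiBB tr w0 p ∧ TauStar tr x0 q ∧ TauStar tr q w0) with hR
  have hRsym : ∀ p q, R p q → R q p := by
    intro p q h
    rcases h with h | h | h
    · exact Or.inl (semiBB_symm h)
    · exact Or.inr (Or.inr h)
    · exact Or.inr (Or.inl h)
  have hsim : Sim tr R := by
    intro p q hpq a p' hstep
    rcases hpq with h | ⟨x0, w0, hx0, hw0, htx, htw⟩ | ⟨x0, w0, hx0, hw0, htx, htw⟩
    · rcases sim_semiBB p q h a p' hstep with ⟨rfl, q2, ht, hm1, hm2⟩ | ⟨qb, q', h1, h2, h3, h4⟩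
      · exact Or.inl ⟨rfl, q2, ht, Or.inl hm1, Or.inl hm2⟩
      · exact Or.inr ⟨qb, q', h1, h2, Or.inl h3, Or.inl h4⟩
    · -- p is a mid point on a path x0 ⟹ p ⟹ w0, with x0, w0 ≈ q
      obtain ⟨q1, htq1, hpq1⟩ := sim_semiBB.follow hx0 htx
      rcases sim_semiBB p q1 hpq1 a p' hstep with ⟨rfl, q2, ht2, hm1, hm2⟩ |
        ⟨qb, q', h1, h2, h3, h4⟩
      · exact Or.inl ⟨rfl, q2, htq1.trans ht2, Or.inl hm1, Or.inl hm2⟩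
      · exact Or.inr ⟨qb, q', htq1.trans h1, h2, Or.inl h3, Or.inl h4⟩
    · -- q is a mid point on a path x0 ⟹ q ⟹ w0, with x0, w0 ≈ p
      rcases sim_semiBB p w0 (semiBB_symm hw0) a p' hstep with ⟨rfl, w2, ht2, hm1, hm2⟩ |
        ⟨wb, w', h1, h2, h3, h4⟩
      · exact Or.inl ⟨rfl, w2, htw.trans ht2, Or.inl hm1, Or.inl hm2⟩
      · exact Or.inr ⟨wb, w', htw.trans h1, h2, Or.inl h3, Or.inl h4⟩
  have : IsSemiBB tr R := ⟨hsim, hsim.mono fun a b => ⟨fun h => hRsym _ _ h, fun h => hRsym _ _ h⟩⟩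
  exact ⟨R, this, Or.inr (Or.inl ⟨x, w, hxy, hwy, hxz, hzw⟩)⟩

lemma isBranchingBisim_semiBB : IsBranchingBisim tr (SemiBB tr) := by
  constructor
  · intro a b h; exact semiBB_symm h
  · intro s1 s2 h a s1' hstep
    rcases sim_semiBB s1 s2 h a s1' hstep with ⟨rfl, s2t, ht, hm1, hm2⟩ |
      ⟨s2b, s2', h1, h2, h3, h4⟩
    · rcases (Relation.ReflTransGen.cases_tail ht) with rfl | ⟨c, hc1, hc2⟩
      · exact Or.inl ⟨rfl, hm2⟩
      · refine Or.inr ⟨c, s2t, hc1, hc2, ?_, hm2⟩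
        exact semiBB_symm (semiBB_stutter (semiBB_symm h) hc1
          (Relation.ReflTransGen.single hc2) (semiBB_symm hm1))
    · exact Or.inr ⟨s2b, s2', h1, h2, h3, h4⟩

lemma brBisim_iff_semiBB {x y : S} : BrBisim tr x y ↔ SemiBB tr x y :=
  ⟨brBisim_semiBB, fun h => ⟨SemiBB tr, isBranchingBisim_semiBB, h⟩⟩

lemma isBranchingBisim_brBisim : IsBranchingBisim tr (BrBisim tr) := by
  have := isBranchingBisim_semiBB (tr := tr)
  obtain ⟨h1, h2⟩ := this
  constructor
  · intro a b h; exact brBisim_iff_semiBB.2 (h1 (brBisim_iff_semiBB.1 h))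
  · intro s1 s2 h a s1' hstep
    rcases h2 s1 s2 (brBisim_iff_semiBB.1 h) a s1' hstep with ⟨rfl, hm⟩ |
      ⟨s2b, s2', hh1, hh2, hh3, hh4⟩
    · exact Or.inl ⟨rfl, brBisim_iff_semiBB.2 hm⟩
    · exact Or.inr ⟨s2b, s2', hh1, hh2, brBisim_iff_semiBB.2 hh3, brBisim_iff_semiBB.2 hh4⟩

lemma brBisim_refl (x : S) : BrBisim tr x x := by
  refine ⟨Eq, ⟨fun a b h => h.symm, ?_⟩, rfl⟩
  rintro s1 _ rfl a s1' hstep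
  exact Or.inr ⟨s1, s1', Relation.ReflTransGen.refl, hstep, rfl, rfl⟩

lemma brBisim_symm {x y : S} (h : BrBisim tr x y) : BrBisim tr y x :=
  isBranchingBisim_brBisim.1 h

lemma brBisim_trans {x y z : S} (h1 : BrBisim tr x y) (h2 : BrBisim tr y z) : BrBisim tr x z :=
  brBisim_iff_semiBB.2 (semiBB_trans (brBisim_iff_semiBB.1 h1) (brBisim_iff_semiBB.1 h2))

lemma brBisim_stutter {x z w y : S} (hxy : BrBisim tr x y) (hxz : TauStar tr x z)
    (hzw : TauStar tr z w) (hwy : BrBisim tr w y) : BrBisim tr z y :=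
  brBisim_iff_semiBB.2 (semiBB_stutter (brBisim_iff_semiBB.1 hxy) hxz hzw
    (brBisim_iff_semiBB.1 hwy))

lemma brBisim_follow {x y x' : S} (hB : BrBisim tr x y) (ht : TauStar tr x x') :
    ∃ y', TauStar tr y y' ∧ BrBisim tr x' y' := by
  obtain ⟨y', h1, h2⟩ := sim_semiBB.follow (brBisim_iff_semiBB.1 hB) ht
  exact ⟨y', h1, brBisim_iff_semiBB.2 h2⟩

/-- The branching-bisimulation game for `BrBisim` itself. -/
lemma brBisim_game {s1 s2 : S} (h : BrBisim tr s1 s2) {a : Option A} {s1' : S}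
    (hstep : tr s1 a s1') :
    (a = none ∧ BrBisim tr s1' s2) ∨
    (∃ s2b s2', TauStar tr s2 s2b ∧ tr s2b a s2' ∧ BrBisim tr s1 s2b ∧ BrBisim tr s1' s2') :=
  isBranchingBisim_brBisim.2 s1 s2 h a s1' hstep


end LTS

section Security

variable (env : C → Proc A C) (AH : Set A)

/-- `P ∈ BrSNNI` iff `P∖A_H ≈_b P/A_H`. -/
def BrSNNI (p : Proc A C) : Prop :=
  BrBisim (Trans env) (.restrict p AH) (.hide p AH)

/-- All processes reachable from `q` perform only actions in `AH`. -/
def HighOnly (q : Proc A C) : Prop :=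
  ∀ q', Reach (Trans env) q q' → ∀ a q'', Trans env q' a q'' → ∃ h ∈ AH, a = some h

/-- `P ∈ BrNDC` iff `P∖A_H ≈_b ((P ∥_L Q)/L)∖A_H` for every high-level `Q`
and every `L ⊆ A_H`. -/
def BrNDC (p : Proc A C) : Prop :=
  ∀ q, HighOnly env AH q → ∀ L, L ⊆ AH →
    BrBisim (Trans env) (.restrict p AH) (.restrict (.hide (.par L p q) L) AH)

/-- `P ∈ SBrSNNI` iff every reachable process is BrSNNI. -/
def SBrSNNI (p : Proc A C) : Prop :=
  ∀ p', Reach (Trans env) p p' → BrSNNI env AH p'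

/-- `P ∈ P_BrNDC` iff every reachable process is BrNDC. -/
def PBrNDC (p : Proc A C) : Prop :=
  ∀ p', Reach (Trans env) p p' → BrNDC env AH p'

/-- `P ∈ SBrNDC` iff for every reachable `P'` and every high transition
`P' --h→ P''`, `P'∖A_H ≈_b P''∖A_H`. -/
def SBrNDC (p : Proc A C) : Prop :=
  ∀ p' p'', Reach (Trans env) p p' → ∀ h ∈ AH, Trans env p' (some h) p'' →
    BrBisim (Trans env) (.restrict p' AH) (.restrict p'' AH)

/-- `P ∈ BSNNI` iff `P∖A_H ≈ P/A_H`. -/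
def BSNNI (p : Proc A C) : Prop :=
  WeakBisim (Trans env) (.restrict p AH) (.hide p AH)

/-- `P ∈ BNDC` iff `P∖A_H ≈ ((P ∥_L Q)/L)∖A_H` for every high-level `Q`
and every `L ⊆ A_H`. -/
def BNDC (p : Proc A C) : Prop :=
  ∀ q, HighOnly env AH q → ∀ L, L ⊆ AH →
    WeakBisim (Trans env) (.restrict p AH) (.restrict (.hide (.par L p q) L) AH)

/-- `P ∈ SBSNNI` iff every reachable process is BSNNI. -/
def SBSNNI (p : Proc A C) : Prop :=
  ∀ p', Reach (Trans env) p p' → BSNNI env AH p'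

/-- `P ∈ P_BNDC` iff every reachable process is BNDC. -/
def PBNDC (p : Proc A C) : Prop :=
  ∀ p', Reach (Trans env) p p' → BNDC env AH p'

/-- `P ∈ SBNDC` iff for every reachable `P'` and every high transition
`P' --h→ P''`, `P'∖A_H ≈ P''∖A_H`. -/
def SBNDC (p : Proc A C) : Prop :=
  ∀ p' p'', Reach (Trans env) p p' → ∀ h ∈ AH, Trans env p' (some h) p'' →
    WeakBisim (Trans env) (.restrict p' AH) (.restrict p'' AH)

/-- No high-level actions occur in `p`: no process reachable from `p`
can perform a high-level action. -/
def NoHigh (p : Proc A C) : Prop :=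
  ∀ p', Reach (Trans env) p p' → ∀ h ∈ AH, ∀ p'', ¬ Trans env p' (some h) p''

end Security


section ProcLemmas

variable {env : C → Proc A C} {AH : Set A}

lemma reach_step {p p' p'' : Proc A C} {a : Option A} (h : Reach (Trans env) p p')
    (hs : Trans env p' a p'') : Reach (Trans env) p p'' :=
  Relation.ReflTransGen.tail h ⟨a, hs⟩

lemma highOnly_step {q q' : Proc A C} {a : Option A} (h : HighOnly env AH q)
    (hs : Trans env q a q') : HighOnly env AH q' := by
  intro q2 hr a2 q3 h3
  exact h q2 (Relation.ReflTransGen.head ⟨a, hs⟩ hr) a2 q3 h3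

lemma reach_par {L : Set A} {P1 P2 X : Proc A C}
    (h : Reach (Trans env) (.par L P1 P2) X) :
    ∃ u1 u2, X = .par L u1 u2 ∧ Reach (Trans env) P1 u1 ∧ Reach (Trans env) P2 u2 := by
  induction h with
  | refl => exact ⟨P1, P2, rfl, Relation.ReflTransGen.refl, Relation.ReflTransGen.refl⟩
  | tail _ hstep ih =>
    obtain ⟨u1, u2, rfl, h1, h2⟩ := ih
    obtain ⟨a, hstep⟩ := hstep
    cases hstep with
    | parL h hn => exact ⟨_, u2, rfl, reach_step h1 h, h2⟩
    | parR h hn => exact ⟨u1, _, rfl, h1, reach_step h2 h⟩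
    | sync ha hb hx => exact ⟨_, _, rfl, reach_step h1 ha, reach_step h2 hb⟩

lemma trans_restrict_inv {p X : Proc A C} {Lr : Set A} {a : Option A}
    (h : Trans env (.restrict p Lr) a X) :
    ∃ p', X = .restrict p' Lr ∧ Trans env p a p' ∧ ∀ x, a = some x → x ∉ Lr := by
  cases h with
  | res h hn => exact ⟨_, rfl, h, hn⟩

lemma tauStar_restrict_inv {p : Proc A C} {Lr : Set A} {X : Proc A C}
    (h : TauStar (Trans env) (.restrict p Lr) X) :
    ∃ p', X = .restrict p' Lr ∧ TauStar (Trans env) p p' := by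
  induction h with
  | refl => exact ⟨p, rfl, Relation.ReflTransGen.refl⟩
  | tail _ hstep ih =>
    obtain ⟨p', rfl, ht⟩ := ih
    obtain ⟨p'', rfl, hs, -⟩ := trans_restrict_inv hstep
    exact ⟨p'', rfl, ht.tail hs⟩

/-- A "hidden-τ" step of `p` w.r.t. the hiding set `AH`. -/
def HTau (env : C → Proc A C) (AH : Set A) (p p' : Proc A C) : Prop :=
  Trans env p none p' ∨ ∃ x ∈ AH, Trans env p (some x) p'

lemma tauStar_hide_inv {p X : Proc A C}
    (h : TauStar (Trans env) (.hide p AH) X) :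
    ∃ p', X = .hide p' AH ∧ Relation.ReflTransGen (HTau env AH) p p' := by
  induction h with
  | refl => exact ⟨p, rfl, Relation.ReflTransGen.refl⟩
  | tail _ hstep ih =>
    obtain ⟨p', rfl, ht⟩ := ih
    cases hstep with
    | hideIn h hx => exact ⟨_, rfl, ht.tail (Or.inr ⟨_, hx, h⟩)⟩
    | hideOut h hn => exact ⟨_, rfl, ht.tail (Or.inl h)⟩

lemma tauStar_restrict_lift {p p' : Proc A C} {Lr : Set A}
    (h : TauStar (Trans env) p p') :
    TauStar (Trans env) (.restrict p Lr) (.restrict p' Lr) :=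
  rtgLift (fun x => Proc.restrict x Lr)
    (fun _ _ hs => Trans.res hs (fun _ hx => nomatch hx)) h

end ProcLemmas


section Part3

variable {env : C → Proc A C} {AH : Set A}

lemma brBisim_restrict_par_congr {L : Set A} {a b a' b' : Proc A C}
    (ha : BrBisim (Trans env) (.restrict a AH) (.restrict a' AH))
    (hb : BrBisim (Trans env) (.restrict b AH) (.restrict b' AH)) :
    BrBisim (Trans env) (.restrict (.par L a b) AH) (.restrict (.par L a' b') AH) := by
  set tr := Trans env with htr
  refine ⟨fun X Y => ∃ a b a' b', X = .restrict (.par L a b) AH ∧ Y = .restrict (.par L a' b') AH ∧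
      BrBisim tr (.restrict a AH) (.restrict a' AH) ∧
      BrBisim tr (.restrict b AH) (.restrict b' AH), ⟨?_, ?_⟩,
    a, b, a', b', rfl, rfl, ha, hb⟩
  · rintro X Y ⟨a, b, a', b', rfl, rfl, h1, h2⟩
    exact ⟨a', b', a, b, rfl, rfl, brBisim_symm h1, brBisim_symm h2⟩
  · rintro X Y ⟨a, b, a', b', rfl, rfl, h1, h2⟩ act X' hstep
    obtain ⟨m, rfl, hm, hnAH⟩ := trans_restrict_inv hstep
    cases hm with
    | @parL _ _ _ _ a1 hsa hnL =>
      have hra : tr (.restrict a AH) act (.restrict a1 AH) := Trans.res hsa hnAH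
      rcases brBisim_game h1 hra with ⟨rfl, hB⟩ | ⟨Yb, Y', htau, hstep2, hmid, hfin⟩
      · exact Or.inl ⟨rfl, a1, b, a', b', rfl, rfl, hB, h2⟩
      · obtain ⟨abar, rfl, hta⟩ := tauStar_restrict_inv htau
        obtain ⟨a1', rfl, hsa', hn'⟩ := trans_restrict_inv hstep2
        refine Or.inr ⟨.restrict (.par L abar b') AH, .restrict (.par L a1' b') AH, ?_, ?_, ?_, ?_⟩
        · exact rtgLift (fun x => Proc.restrict (Proc.par L x b') AH)
            (fun _ _ hs => Trans.res (Trans.parL hs (fun _ hx => nomatch hx))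
              (fun _ hx => nomatch hx)) hta
        · exact Trans.res (Trans.parL hsa' hnL) hn'
        · exact ⟨a, b, abar, b', rfl, rfl, hmid, h2⟩
        · exact ⟨a1, b, a1', b', rfl, rfl, hfin, h2⟩
    | @parR _ _ _ _ b1 hsb hnL =>
      have hrb : tr (.restrict b AH) act (.restrict b1 AH) := Trans.res hsb hnAH
      rcases brBisim_game h2 hrb with ⟨rfl, hB⟩ | ⟨Yb, Y', htau, hstep2, hmid, hfin⟩
      · exact Or.inl ⟨rfl, a, b1, a', b', rfl, rfl, h1, hB⟩
      · obtain ⟨bbar, rfl, htb⟩ := tauStar_restrict_inv htau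
        obtain ⟨b1', rfl, hsb', hn'⟩ := trans_restrict_inv hstep2
        refine Or.inr ⟨.restrict (.par L a' bbar) AH, .restrict (.par L a' b1') AH, ?_, ?_, ?_, ?_⟩
        · exact rtgLift (fun x => Proc.restrict (Proc.par L a' x) AH)
            (fun _ _ hs => Trans.res (Trans.parR hs (fun _ hx => nomatch hx))
              (fun _ hx => nomatch hx)) htb
        · exact Trans.res (Trans.parR hsb' hnL) hn'
        · exact ⟨a, b, a', bbar, rfl, rfl, h1, hmid⟩
        · exact ⟨a, b1, a', b1', rfl, rfl, h1, hfin⟩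
    | @sync _ _ _ x a1 b1 hsa hsb hx =>
      have hra : tr (.restrict a AH) (some x) (.restrict a1 AH) := Trans.res hsa hnAH
      have hrb : tr (.restrict b AH) (some x) (.restrict b1 AH) := Trans.res hsb hnAH
      rcases brBisim_game h1 hra with ⟨h', -⟩ | ⟨Ya, Ya', hta, hsa2, hmida, hfina⟩
      · exact absurd h' (by simp)
      rcases brBisim_game h2 hrb with ⟨h', -⟩ | ⟨Yb, Yb', htb, hsb2, hmidb, hfinb⟩
      · exact absurd h' (by simp)
      obtain ⟨abar, rfl, hta'⟩ := tauStar_restrict_inv hta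
      obtain ⟨a1', rfl, hsa', hna'⟩ := trans_restrict_inv hsa2
      obtain ⟨bbar, rfl, htb'⟩ := tauStar_restrict_inv htb
      obtain ⟨b1', rfl, hsb', hnb'⟩ := trans_restrict_inv hsb2
      refine Or.inr ⟨.restrict (.par L abar bbar) AH, .restrict (.par L a1' b1') AH, ?_, ?_, ?_, ?_⟩
      · have l1 : TauStar tr (.restrict (.par L a' b') AH) (.restrict (.par L abar b') AH) :=
          rtgLift (fun y => Proc.restrict (Proc.par L y b') AH)
            (fun _ _ hs => Trans.res (Trans.parL hs (fun _ hx => nomatch hx))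
              (fun _ hx => nomatch hx)) hta'
        have l2 : TauStar tr (.restrict (.par L abar b') AH) (.restrict (.par L abar bbar) AH) :=
          rtgLift (fun y => Proc.restrict (Proc.par L abar y) AH)
            (fun _ _ hs => Trans.res (Trans.parR hs (fun _ hx => nomatch hx))
              (fun _ hx => nomatch hx)) htb'
        exact l1.trans l2
      · exact Trans.res (Trans.sync hsa' hsb' hx) hna'
      · exact ⟨a, b, abar, bbar, rfl, rfl, hmida, hmidb⟩
      · exact ⟨a1, b1, a1', b1', rfl, rfl, hfina, hfinb⟩

lemma sbrndc_par {L : Set A} {P1 P2 : Proc A C} (h1 : SBrNDC env AH P1) (h2 : SBrNDC env AH P2) :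
    SBrNDC env AH (.par L P1 P2) := by
  intro p' p'' hr h hhAH hstep
  obtain ⟨u1, u2, rfl, hr1, hr2⟩ := reach_par hr
  cases hstep with
  | parL hs hn => exact brBisim_restrict_par_congr (h1 u1 _ hr1 h hhAH hs) (brBisim_refl _)
  | parR hs hn => exact brBisim_restrict_par_congr (brBisim_refl _) (h2 u2 _ hr2 h hhAH hs)
  | sync ha hb hx =>
      exact brBisim_restrict_par_congr (h1 u1 _ hr1 h hhAH ha) (h2 u2 _ hr2 h hhAH hb)

end Part3


section Part1

variable {env : C → Proc A C} {AH : Set A}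

lemma trans_hide_inv {p X : Proc A C} {Lh : Set A} {act : Option A}
    (h : Trans env (.hide p Lh) act X) :
    ∃ p', X = .hide p' Lh ∧
      ((∃ x ∈ Lh, act = none ∧ Trans env p (some x) p') ∨
       (Trans env p act p' ∧ ∀ x, act = some x → x ∉ Lh)) := by
  cases h with
  | hideIn h hx => exact ⟨_, rfl, Or.inl ⟨_, hx, rfl, h⟩⟩
  | hideOut h hn => exact ⟨_, rfl, Or.inr ⟨h, hn⟩⟩

/-- The relation witnessing part 1. -/
def P1Core (env : C → Proc A C) (AH L : Set A) (X Y : Proc A C) : Prop :=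
  ∃ q1 q2 r1 r2, X = .restrict (.par L q1 q2) AH ∧ Y = .hide (.par L r1 r2) AH ∧
    BrBisim (Trans env) (.restrict q1 AH) (.hide r1 AH) ∧
    BrBisim (Trans env) (.restrict q2 AH) (.hide r2 AH)

variable {L : Set A} (hL : ∀ x ∈ L, x ∉ AH)
include hL

/-- Lift a hidden-τ step of the left component into the hidden parallel composition. -/
lemma htau_liftL {r r' r2 : Proc A C} (h : HTau env AH r r') :
    Trans env (.hide (.par L r r2) AH) none (.hide (.par L r' r2) AH) := by
  rcases h with h | ⟨x, hx, h⟩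
  · exact Trans.hideOut (Trans.parL h (fun _ hx => nomatch hx)) (fun _ hx => nomatch hx)
  · exact Trans.hideIn (Trans.parL h (fun y hy => by cases hy; exact fun hyL => hL _ hyL hx)) hx

lemma htau_liftR {r r' r1 : Proc A C} (h : HTau env AH r r') :
    Trans env (.hide (.par L r1 r) AH) none (.hide (.par L r1 r') AH) := by
  rcases h with h | ⟨x, hx, h⟩
  · exact Trans.hideOut (Trans.parR h (fun _ hx => nomatch hx)) (fun _ hx => nomatch hx)
  · exact Trans.hideIn (Trans.parR h (fun y hy => by cases hy; exact fun hyL => hL _ hyL hx)) hx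

lemma isBB_p1 :
    IsBranchingBisim (Trans env)
      (fun X Y => P1Core env AH L X Y ∨ P1Core env AH L Y X) := by
  set tr := Trans env
  constructor
  · rintro X Y (h | h)
    · exact Or.inr h
    · exact Or.inl h
  have fwd : ∀ X Y, P1Core env AH L X Y → ∀ act X', tr X act X' →
      (act = none ∧ (P1Core env AH L X' Y ∨ P1Core env AH L Y X')) ∨
      (∃ Yb Y', TauStar tr Y Yb ∧ tr Yb act Y' ∧
        (P1Core env AH L X Yb ∨ P1Core env AH L Yb X) ∧
        (P1Core env AH L X' Y' ∨ P1Core env AH L Y' X')) := by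
    rintro X Y ⟨q1, q2, r1, r2, rfl, rfl, h1, h2⟩ act X' hstep
    obtain ⟨m, rfl, hm, hnAH⟩ := trans_restrict_inv hstep
    cases hm with
    | @parL _ _ _ _ q1' hsa hnL =>
      rcases brBisim_game h1 (Trans.res hsa hnAH) with ⟨rfl, hB⟩ |
        ⟨Yb, Y', htau, hstep2, hmid, hfin⟩
      · exact Or.inl ⟨rfl, Or.inl ⟨q1', q2, r1, r2, rfl, rfl, hB, h2⟩⟩
      · obtain ⟨rb, rfl, htr⟩ := tauStar_hide_inv htau
        have hliftS : TauStar tr (.hide (.par L r1 r2) AH) (.hide (.par L rb r2) AH) :=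
          rtgLift (fun y => Proc.hide (Proc.par L y r2) AH)
            (fun _ _ hs => htau_liftL hL hs) htr
        obtain ⟨r1', rfl, hcase⟩ := trans_hide_inv hstep2
        rcases hcase with ⟨x, hxAH, rfl, hs⟩ | ⟨hs, hn2⟩
        · refine Or.inr ⟨_, _, hliftS,
            Trans.hideIn (Trans.parL hs (fun y hy => by cases hy; exact fun hyL => hL _ hyL hxAH))
              hxAH, Or.inl ⟨q1, q2, rb, r2, rfl, rfl, hmid, h2⟩,
            Or.inl ⟨q1', q2, r1', r2, rfl, rfl, hfin, h2⟩⟩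
        · exact Or.inr ⟨_, _, hliftS, Trans.hideOut (Trans.parL hs hnL) hn2,
            Or.inl ⟨q1, q2, rb, r2, rfl, rfl, hmid, h2⟩,
            Or.inl ⟨q1', q2, r1', r2, rfl, rfl, hfin, h2⟩⟩
    | @parR _ _ _ _ q2' hsb hnL =>
      rcases brBisim_game h2 (Trans.res hsb hnAH) with ⟨rfl, hB⟩ |
        ⟨Yb, Y', htau, hstep2, hmid, hfin⟩
      · exact Or.inl ⟨rfl, Or.inl ⟨q1, q2', r1, r2, rfl, rfl, h1, hB⟩⟩
      · obtain ⟨rb, rfl, htr⟩ := tauStar_hide_inv htau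
        have hliftS : TauStar tr (.hide (.par L r1 r2) AH) (.hide (.par L r1 rb) AH) :=
          rtgLift (fun y => Proc.hide (Proc.par L r1 y) AH)
            (fun _ _ hs => htau_liftR hL hs) htr
        obtain ⟨r2', rfl, hcase⟩ := trans_hide_inv hstep2
        rcases hcase with ⟨x, hxAH, rfl, hs⟩ | ⟨hs, hn2⟩
        · refine Or.inr ⟨_, _, hliftS,
            Trans.hideIn (Trans.parR hs (fun y hy => by cases hy; exact fun hyL => hL _ hyL hxAH))
              hxAH, Or.inl ⟨q1, q2, r1, rb, rfl, rfl, h1, hmid⟩,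
            Or.inl ⟨q1, q2', r1, r2', rfl, rfl, h1, hfin⟩⟩
        · exact Or.inr ⟨_, _, hliftS, Trans.hideOut (Trans.parR hs hnL) hn2,
            Or.inl ⟨q1, q2, r1, rb, rfl, rfl, h1, hmid⟩,
            Or.inl ⟨q1, q2', r1, r2', rfl, rfl, h1, hfin⟩⟩
    | @sync _ _ _ x q1' q2' hsa hsb hx =>
      have hxAH : x ∉ AH := hnAH x rfl
      rcases brBisim_game h1 (Trans.res hsa hnAH) with ⟨h', -⟩ |
        ⟨Ya, Ya', hta, hsa2, hmida, hfina⟩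
      · exact absurd h' (by simp)
      rcases brBisim_game h2 (Trans.res hsb hnAH) with ⟨h', -⟩ |
        ⟨Yb, Yb', htb, hsb2, hmidb, hfinb⟩
      · exact absurd h' (by simp)
      obtain ⟨ra, rfl, htra⟩ := tauStar_hide_inv hta
      obtain ⟨r1', rfl, hcasea⟩ := trans_hide_inv hsa2
      rcases hcasea with ⟨y, hyAH, h', hs⟩ | ⟨hsa', -⟩
      · exact absurd h' (by simp)
      obtain ⟨rb, rfl, htrb⟩ := tauStar_hide_inv htb
      obtain ⟨r2', rfl, hcaseb⟩ := trans_hide_inv hsb2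
      rcases hcaseb with ⟨y, hyAH, h', hs⟩ | ⟨hsb', -⟩
      · exact absurd h' (by simp)
      have l1 : TauStar tr (.hide (.par L r1 r2) AH) (.hide (.par L ra r2) AH) :=
        rtgLift (fun y => Proc.hide (Proc.par L y r2) AH)
          (fun _ _ hs => htau_liftL hL hs) htra
      have l2 : TauStar tr (.hide (.par L ra r2) AH) (.hide (.par L ra rb) AH) :=
        rtgLift (fun y => Proc.hide (Proc.par L ra y) AH)
          (fun _ _ hs => htau_liftR hL hs) htrb
      refine Or.inr ⟨_, _, l1.trans l2,
        Trans.hideOut (Trans.sync hsa' hsb' hx) (fun y hy => by cases hy; exact hxAH),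
        Or.inl ⟨q1, q2, ra, rb, rfl, rfl, hmida, hmidb⟩,
        Or.inl ⟨q1', q2', r1', r2', rfl, rfl, hfina, hfinb⟩⟩
  have bwd : ∀ X Y, P1Core env AH L X Y → ∀ act Y', tr Y act Y' →
      (act = none ∧ (P1Core env AH L X Y' ∨ P1Core env AH L Y' X)) ∨
      (∃ Xb X', TauStar tr X Xb ∧ tr Xb act X' ∧
        (P1Core env AH L Xb Y ∨ P1Core env AH L Y Xb) ∧
        (P1Core env AH L X' Y' ∨ P1Core env AH L Y' X')) := by
    rintro X Y ⟨q1, q2, r1, r2, rfl, rfl, h1, h2⟩ act Y' hstep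
    obtain ⟨m, rfl, hcase⟩ := trans_hide_inv hstep
    rcases hcase with ⟨x, hxAH, rfl, hs⟩ | ⟨hs, hn2⟩
    · -- hidden high action: act = none
      cases hs with
      | @parL _ _ _ _ r1' hsa hnL =>
        rcases brBisim_game (brBisim_symm h1) (Trans.hideIn hsa hxAH) with ⟨-, hB⟩ |
          ⟨Xb, X', htau, hstep2, hmid, hfin⟩
        · exact Or.inl ⟨rfl, Or.inl ⟨q1, q2, r1', r2, rfl, rfl, brBisim_symm hB, h2⟩⟩
        · obtain ⟨qb, rfl, htq⟩ := tauStar_restrict_inv htau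
          obtain ⟨q1', rfl, hsq, hnq⟩ := trans_restrict_inv hstep2
          refine Or.inr ⟨.restrict (.par L qb q2) AH, .restrict (.par L q1' q2) AH,
            rtgLift (fun y => Proc.restrict (Proc.par L y q2) AH)
              (fun _ _ hs => Trans.res (Trans.parL hs (fun _ hx => nomatch hx))
                (fun _ hx => nomatch hx)) htq,
            Trans.res (Trans.parL hsq (fun _ hx => nomatch hx)) (fun _ hx => nomatch hx),
            Or.inl ⟨qb, q2, r1, r2, rfl, rfl, brBisim_symm hmid, h2⟩,
            Or.inl ⟨q1', q2, r1', r2, rfl, rfl, brBisim_symm hfin, h2⟩⟩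
      | @parR _ _ _ _ r2' hsb hnL =>
        rcases brBisim_game (brBisim_symm h2) (Trans.hideIn hsb hxAH) with ⟨-, hB⟩ |
          ⟨Xb, X', htau, hstep2, hmid, hfin⟩
        · exact Or.inl ⟨rfl, Or.inl ⟨q1, q2, r1, r2', rfl, rfl, h1, brBisim_symm hB⟩⟩
        · obtain ⟨qb, rfl, htq⟩ := tauStar_restrict_inv htau
          obtain ⟨q2', rfl, hsq, hnq⟩ := trans_restrict_inv hstep2
          refine Or.inr ⟨.restrict (.par L q1 qb) AH, .restrict (.par L q1 q2') AH,
            rtgLift (fun y => Proc.restrict (Proc.par L q1 y) AH)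
              (fun _ _ hs => Trans.res (Trans.parR hs (fun _ hx => nomatch hx))
                (fun _ hx => nomatch hx)) htq,
            Trans.res (Trans.parR hsq (fun _ hx => nomatch hx)) (fun _ hx => nomatch hx),
            Or.inl ⟨q1, qb, r1, r2, rfl, rfl, h1, brBisim_symm hmid⟩,
            Or.inl ⟨q1, q2', r1, r2', rfl, rfl, h1, brBisim_symm hfin⟩⟩
      | sync hsa hsb hx => exact absurd hxAH (hL _ hx)
    · -- visible (or low-τ) action
      cases hs with
      | @parL _ _ _ _ r1' hsa hnL =>
        rcases brBisim_game (brBisim_symm h1) (Trans.hideOut hsa hn2) with ⟨rfl, hB⟩ |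
          ⟨Xb, X', htau, hstep2, hmid, hfin⟩
        · exact Or.inl ⟨rfl, Or.inl ⟨q1, q2, r1', r2, rfl, rfl, brBisim_symm hB, h2⟩⟩
        · obtain ⟨qb, rfl, htq⟩ := tauStar_restrict_inv htau
          obtain ⟨q1', rfl, hsq, hnq⟩ := trans_restrict_inv hstep2
          refine Or.inr ⟨.restrict (.par L qb q2) AH, .restrict (.par L q1' q2) AH,
            rtgLift (fun y => Proc.restrict (Proc.par L y q2) AH)
              (fun _ _ hs => Trans.res (Trans.parL hs (fun _ hx => nomatch hx))
                (fun _ hx => nomatch hx)) htq,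
            Trans.res (Trans.parL hsq hnL) hnq,
            Or.inl ⟨qb, q2, r1, r2, rfl, rfl, brBisim_symm hmid, h2⟩,
            Or.inl ⟨q1', q2, r1', r2, rfl, rfl, brBisim_symm hfin, h2⟩⟩
      | @parR _ _ _ _ r2' hsb hnL =>
        rcases brBisim_game (brBisim_symm h2) (Trans.hideOut hsb hn2) with ⟨rfl, hB⟩ |
          ⟨Xb, X', htau, hstep2, hmid, hfin⟩
        · exact Or.inl ⟨rfl, Or.inl ⟨q1, q2, r1, r2', rfl, rfl, h1, brBisim_symm hB⟩⟩
        · obtain ⟨qb, rfl, htq⟩ := tauStar_restrict_inv htau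
          obtain ⟨q2', rfl, hsq, hnq⟩ := trans_restrict_inv hstep2
          refine Or.inr ⟨.restrict (.par L q1 qb) AH, .restrict (.par L q1 q2') AH,
            rtgLift (fun y => Proc.restrict (Proc.par L q1 y) AH)
              (fun _ _ hs => Trans.res (Trans.parR hs (fun _ hx => nomatch hx))
                (fun _ hx => nomatch hx)) htq,
            Trans.res (Trans.parR hsq hnL) hnq,
            Or.inl ⟨q1, qb, r1, r2, rfl, rfl, h1, brBisim_symm hmid⟩,
            Or.inl ⟨q1, q2', r1, r2', rfl, rfl, h1, brBisim_symm hfin⟩⟩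
      | @sync _ _ _ x r1' r2' hsa hsb hx =>
        rcases brBisim_game (brBisim_symm h1) (Trans.hideOut hsa hn2) with ⟨h', -⟩ |
          ⟨Xa, Xa', hta, hsa2, hmida, hfina⟩
        · exact absurd h' (by simp)
        rcases brBisim_game (brBisim_symm h2) (Trans.hideOut hsb hn2) with ⟨h', -⟩ |
          ⟨Xb, Xb', htb, hsb2, hmidb, hfinb⟩
        · exact absurd h' (by simp)
        obtain ⟨qa, rfl, htqa⟩ := tauStar_restrict_inv hta
        obtain ⟨q1', rfl, hsqa, hnqa⟩ := trans_restrict_inv hsa2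
        obtain ⟨qb, rfl, htqb⟩ := tauStar_restrict_inv htb
        obtain ⟨q2', rfl, hsqb, hnqb⟩ := trans_restrict_inv hsb2
        have l1 : TauStar tr (.restrict (.par L q1 q2) AH) (.restrict (.par L qa q2) AH) :=
          rtgLift (fun y => Proc.restrict (Proc.par L y q2) AH)
            (fun _ _ hs => Trans.res (Trans.parL hs (fun _ hx => nomatch hx))
              (fun _ hx => nomatch hx)) htqa
        have l2 : TauStar tr (.restrict (.par L qa q2) AH) (.restrict (.par L qa qb) AH) :=
          rtgLift (fun y => Proc.restrict (Proc.par L qa y) AH)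
            (fun _ _ hs => Trans.res (Trans.parR hs (fun _ hx => nomatch hx))
              (fun _ hx => nomatch hx)) htqb
        refine Or.inr ⟨_, _, l1.trans l2, Trans.res (Trans.sync hsqa hsqb hx) hnqa,
          Or.inl ⟨qa, qb, r1, r2, rfl, rfl, brBisim_symm hmida, brBisim_symm hmidb⟩,
          Or.inl ⟨q1', q2', r1', r2', rfl, rfl, brBisim_symm hfina, brBisim_symm hfinb⟩⟩
  rintro X Y (hc | hc) act s' hstep
  · rcases fwd X Y hc act s' hstep with ⟨rfl, h'⟩ | ⟨Yb, Y', ht, hs, hm, hf⟩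
    · exact Or.inl ⟨rfl, h'⟩
    · exact Or.inr ⟨Yb, Y', ht, hs, hm, hf⟩
  · rcases bwd Y X hc act s' hstep with ⟨rfl, h'⟩ | ⟨Xb, X', ht, hs, hm, hf⟩
    · exact Or.inl ⟨rfl, by tauto⟩
    · exact Or.inr ⟨Xb, X', ht, hs, by tauto, by tauto⟩

lemma sbrsnni_par {P1 P2 : Proc A C} (h1 : SBrSNNI env AH P1) (h2 : SBrSNNI env AH P2) :
    SBrSNNI env AH (.par L P1 P2) := by
  intro p' hr
  obtain ⟨u1, u2, rfl, hr1, hr2⟩ := reach_par hr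
  exact ⟨fun X Y => P1Core env AH L X Y ∨ P1Core env AH L Y X, isBB_p1 hL,
    Or.inl ⟨u1, u2, u1, u2, rfl, rfl, h1 u1 hr1, h2 u2 hr2⟩⟩

end Part1


section Part2

variable {env : C → Proc A C} {AH : Set A}

lemma reach_of_tauStar {p p' : Proc A C} (h : TauStar (Trans env) p p') :
    Reach (Trans env) p p' :=
  rtgMono (fun _ _ hs => ⟨none, hs⟩) h

lemma highOnly_pre_nil {h : A} (hh : h ∈ AH) :
    HighOnly env AH (.pre (some h) .nil) := by
  have hre : ∀ X : Proc A C, Reach (Trans env) (.pre (some h) .nil) X →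
      X = .pre (some h) .nil ∨ X = .nil := by
    intro X hr
    induction hr with
    | refl => exact Or.inl rfl
    | tail _ hstep ih =>
      obtain ⟨a, hstep⟩ := hstep
      rcases ih with rfl | rfl
      · cases hstep; exact Or.inr rfl
      · exact absurd hstep (by rintro ⟨⟩)
  intro q' hr a q'' hs
  rcases hre q' hr with rfl | rfl
  · cases hs; exact ⟨h, hh, rfl⟩
  · exact absurd hs (by rintro ⟨⟩)

/-- After the one-shot tester has died, the composition behaves like the
restriction-free process. -/
lemma brBisim_dead_tester {h : A} (hh : h ∈ AH) (u : Proc A C) :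
    BrBisim (Trans env) (.restrict (.hide (.par {h} u .nil) {h}) AH) (.restrict u AH) := by
  set tr := Trans env
  refine ⟨fun X Y => (∃ w : Proc A C, X = .restrict (.hide (.par {h} w .nil) {h}) AH ∧
      Y = .restrict w AH) ∨ (∃ w : Proc A C, Y = .restrict (.hide (.par {h} w .nil) {h}) AH ∧
      X = .restrict w AH), ⟨?_, ?_⟩, Or.inl ⟨u, rfl, rfl⟩⟩
  · rintro X Y (⟨w, rfl, rfl⟩ | ⟨w, rfl, rfl⟩)
    · exact Or.inr ⟨w, rfl, rfl⟩
    · exact Or.inl ⟨w, rfl, rfl⟩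
  rintro X Y (⟨w, rfl, rfl⟩ | ⟨w, rfl, rfl⟩) act X' hstep
  · obtain ⟨m, rfl, hm, hnAH⟩ := trans_restrict_inv hstep
    obtain ⟨m2, rfl, hcase⟩ := trans_hide_inv hm
    rcases hcase with ⟨x, hxh, rfl, hs⟩ | ⟨hs, hn2⟩
    · cases hs with
      | parL h hn => exact absurd hxh (hn _ rfl)
      | parR h hn => exact absurd h (by rintro ⟨⟩)
      | sync h1 h2 hx => exact absurd h2 (by rintro ⟨⟩)
    · cases hs with
      | @parL _ _ _ _ w' hsw hn =>
        exact Or.inr ⟨_, .restrict w' AH, Relation.ReflTransGen.refl, Trans.res hsw hnAH,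
          Or.inl ⟨w, rfl, rfl⟩, Or.inl ⟨w', rfl, rfl⟩⟩
      | parR h hn => exact absurd h (by rintro ⟨⟩)
      | sync h1 h2 hx => exact absurd h2 (by rintro ⟨⟩)
  · obtain ⟨w', rfl, hsw, hnAH⟩ := trans_restrict_inv hstep
    have hn1 : ∀ x, act = some x → x ∉ ({h} : Set A) := by
      rintro x rfl hxh
      rw [Set.mem_singleton_iff] at hxh
      subst hxh
      exact hnAH _ rfl hh
    refine Or.inr ⟨_, .restrict (.hide (.par {h} w' .nil) {h}) AH, Relation.ReflTransGen.refl,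
      Trans.res (Trans.hideOut (Trans.parL hsw hn1) hn1) hnAH,
      Or.inr ⟨w, rfl, rfl⟩, Or.inr ⟨w', rfl, rfl⟩⟩

/-- Unwinding condition extracted from `BrNDC` using a one-shot high tester. -/
lemma unwinding {u u' : Proc A C} {h : A} (hh : h ∈ AH) (hndc : BrNDC env AH u)
    (hstep : Trans env u (some h) u') :
    BrBisim (Trans env) (.restrict u AH) (.restrict u' AH) ∨
    ∃ v v', TauStar (Trans env) u v ∧ Trans env v none v' ∧
      BrBisim (Trans env) (.restrict v AH) (.restrict u AH) ∧
      BrBisim (Trans env) (.restrict v' AH) (.restrict u' AH) := by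
  set tr := Trans env
  have hsub : ({h} : Set A) ⊆ AH := by
    intro x hx; rw [Set.mem_singleton_iff] at hx; subst hx; exact hh
  have hBb := hndc (.pre (some h) .nil) (highOnly_pre_nil hh) {h} hsub
  have hmem : h ∈ ({h} : Set A) := rfl
  have hT : tr (.restrict (.hide (.par {h} u (.pre (some h) .nil)) {h}) AH) none
      (.restrict (.hide (.par {h} u' .nil) {h}) AH) :=
    Trans.res (Trans.hideIn (Trans.sync hstep (Trans.pre (some h) .nil) hmem) hmem)
      (fun _ hx => nomatch hx)
  have hdead := brBisim_dead_tester (env := env) hh u'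
  rcases brBisim_game (brBisim_symm hBb) hT with ⟨-, hB⟩ | ⟨Sb, S', htau, hstep2, hmid, hfin⟩
  · exact Or.inl (brBisim_symm (brBisim_trans (brBisim_symm hdead) hB))
  · obtain ⟨v, rfl, htv⟩ := tauStar_restrict_inv htau
    obtain ⟨v', rfl, hsv, -⟩ := trans_restrict_inv hstep2
    refine Or.inr ⟨v, v', htv, hsv, ?_, ?_⟩
    · exact brBisim_trans (brBisim_symm hmid) (brBisim_symm hBb)
    · exact brBisim_trans (brBisim_symm hfin) hdead


/-- The relation witnessing part 2. -/
def P2Core (env : C → Proc A C) (AH L L' : Set A) (P1 P2 : Proc A C) (X Y : Proc A C) : Prop :=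
  ∃ s1 s2 u1 u2 qt, X = .restrict (.par L s1 s2) AH ∧
    Y = .restrict (.hide (.par L' (.par L u1 u2) qt) L') AH ∧
    Reach (Trans env) P1 u1 ∧ Reach (Trans env) P2 u2 ∧ HighOnly env AH qt ∧
    BrBisim (Trans env) (.restrict s1 AH) (.restrict u1 AH) ∧
    BrBisim (Trans env) (.restrict s2 AH) (.restrict u2 AH)

lemma isBB_p2 {L L' : Set A} {P1 P2 : Proc A C} (hL : ∀ x ∈ L, x ∉ AH) (hL' : L' ⊆ AH)
    (hP1 : PBrNDC env AH P1) (hP2 : PBrNDC env AH P2) :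
    IsBranchingBisim (Trans env)
      (fun X Y => P2Core env AH L L' P1 P2 X Y ∨ P2Core env AH L L' P1 P2 Y X) := by
  constructor
  · rintro X Y (h | h)
    · exact Or.inr h
    · exact Or.inl h
  have fwd : ∀ X Y, P2Core env AH L L' P1 P2 X Y → ∀ act X', Trans env X act X' →
      (act = none ∧ (P2Core env AH L L' P1 P2 X' Y ∨ P2Core env AH L L' P1 P2 Y X')) ∨
      (∃ Yb Y', TauStar (Trans env) Y Yb ∧ Trans env Yb act Y' ∧
        (P2Core env AH L L' P1 P2 X Yb ∨ P2Core env AH L L' P1 P2 Yb X) ∧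
        (P2Core env AH L L' P1 P2 X' Y' ∨ P2Core env AH L L' P1 P2 Y' X')) := by
    rintro X Y ⟨s1, s2, u1, u2, qt, rfl, rfl, hr1, hr2, hq, h1, h2⟩ act X' hstep
    obtain ⟨m, rfl, hm, hnAH⟩ := trans_restrict_inv hstep
    cases hm with
    | @parL _ _ _ _ s1' hsa hnL =>
      rcases brBisim_game h1 (Trans.res hsa hnAH) with ⟨rfl, hB⟩ |
        ⟨Yb, Y', htau, hstep2, hmid, hfin⟩
      · exact Or.inl ⟨rfl, Or.inl ⟨s1', s2, u1, u2, qt, rfl, rfl, hr1, hr2, hq, hB, h2⟩⟩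
      · obtain ⟨ub, rfl, htu⟩ := tauStar_restrict_inv htau
        obtain ⟨u1', rfl, hsu, hnu⟩ := trans_restrict_inv hstep2
        have hnL' : ∀ x, act = some x → x ∉ L' := fun x hx hxL' => hnu x hx (hL' hxL')
        refine Or.inr ⟨_, _,
          rtgLift
            (fun y => Proc.restrict (Proc.hide (Proc.par L' (Proc.par L y u2) qt) L') AH)
            (fun _ _ hs => Trans.res (Trans.hideOut (Trans.parL (Trans.parL hs
              (fun _ hx => nomatch hx)) (fun _ hx => nomatch hx)) (fun _ hx => nomatch hx))
              (fun _ hx => nomatch hx)) htu,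
          Trans.res (Trans.hideOut (Trans.parL (Trans.parL hsu hnL) hnL') hnL') hnu,
          Or.inl ⟨s1, s2, ub, u2, qt, rfl, rfl, hr1.trans (reach_of_tauStar htu), hr2, hq,
            hmid, h2⟩,
          Or.inl ⟨s1', s2, u1', u2, qt, rfl, rfl,
            reach_step (hr1.trans (reach_of_tauStar htu)) hsu, hr2, hq, hfin, h2⟩⟩
    | @parR _ _ _ _ s2' hsb hnL =>
      rcases brBisim_game h2 (Trans.res hsb hnAH) with ⟨rfl, hB⟩ |
        ⟨Yb, Y', htau, hstep2, hmid, hfin⟩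
      · exact Or.inl ⟨rfl, Or.inl ⟨s1, s2', u1, u2, qt, rfl, rfl, hr1, hr2, hq, h1, hB⟩⟩
      · obtain ⟨ub, rfl, htu⟩ := tauStar_restrict_inv htau
        obtain ⟨u2', rfl, hsu, hnu⟩ := trans_restrict_inv hstep2
        have hnL' : ∀ x, act = some x → x ∉ L' := fun x hx hxL' => hnu x hx (hL' hxL')
        refine Or.inr ⟨_, _,
          rtgLift
            (fun y => Proc.restrict (Proc.hide (Proc.par L' (Proc.par L u1 y) qt) L') AH)
            (fun _ _ hs => Trans.res (Trans.hideOut (Trans.parL (Trans.parR hs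
              (fun _ hx => nomatch hx)) (fun _ hx => nomatch hx)) (fun _ hx => nomatch hx))
              (fun _ hx => nomatch hx)) htu,
          Trans.res (Trans.hideOut (Trans.parL (Trans.parR hsu hnL) hnL') hnL') hnu,
          Or.inl ⟨s1, s2, u1, ub, qt, rfl, rfl, hr1, hr2.trans (reach_of_tauStar htu), hq,
            h1, hmid⟩,
          Or.inl ⟨s1, s2', u1, u2', qt, rfl, rfl, hr1,
            reach_step (hr2.trans (reach_of_tauStar htu)) hsu, hq, h1, hfin⟩⟩
    | @sync _ _ _ x s1' s2' hsa hsb hx =>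
      rcases brBisim_game h1 (Trans.res hsa hnAH) with ⟨h', -⟩ |
        ⟨Ya, Ya', hta, hsa2, hmida, hfina⟩
      · exact absurd h' (by simp)
      rcases brBisim_game h2 (Trans.res hsb hnAH) with ⟨h', -⟩ |
        ⟨Yb, Yb', htb, hsb2, hmidb, hfinb⟩
      · exact absurd h' (by simp)
      obtain ⟨ua, rfl, htua⟩ := tauStar_restrict_inv hta
      obtain ⟨u1', rfl, hsua, hnua⟩ := trans_restrict_inv hsa2
      obtain ⟨ub, rfl, htub⟩ := tauStar_restrict_inv htb
      obtain ⟨u2', rfl, hsub, hnub⟩ := trans_restrict_inv hsb2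
      have hnL' : ∀ y, (some x : Option A) = some y → y ∉ L' :=
        fun y hy hyL' => hnua y hy (hL' hyL')
      have l1 : TauStar (Trans env)
          (.restrict (.hide (.par L' (.par L u1 u2) qt) L') AH)
          (.restrict (.hide (.par L' (.par L ua u2) qt) L') AH) :=
        rtgLift
          (fun y => Proc.restrict (Proc.hide (Proc.par L' (Proc.par L y u2) qt) L') AH)
          (fun _ _ hs => Trans.res (Trans.hideOut (Trans.parL (Trans.parL hs
            (fun _ hx => nomatch hx)) (fun _ hx => nomatch hx)) (fun _ hx => nomatch hx))
            (fun _ hx => nomatch hx)) htua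
      have l2 : TauStar (Trans env)
          (.restrict (.hide (.par L' (.par L ua u2) qt) L') AH)
          (.restrict (.hide (.par L' (.par L ua ub) qt) L') AH) :=
        rtgLift
          (fun y => Proc.restrict (Proc.hide (Proc.par L' (Proc.par L ua y) qt) L') AH)
          (fun _ _ hs => Trans.res (Trans.hideOut (Trans.parL (Trans.parR hs
            (fun _ hx => nomatch hx)) (fun _ hx => nomatch hx)) (fun _ hx => nomatch hx))
            (fun _ hx => nomatch hx)) htub
      refine Or.inr ⟨_, _, l1.trans l2,
        Trans.res (Trans.hideOut (Trans.parL (Trans.sync hsua hsub hx) hnL') hnL') hnua,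
        Or.inl ⟨s1, s2, ua, ub, qt, rfl, rfl, hr1.trans (reach_of_tauStar htua),
          hr2.trans (reach_of_tauStar htub), hq, hmida, hmidb⟩,
        Or.inl ⟨s1', s2', u1', u2', qt, rfl, rfl,
          reach_step (hr1.trans (reach_of_tauStar htua)) hsua,
          reach_step (hr2.trans (reach_of_tauStar htub)) hsub, hq, hfina, hfinb⟩⟩
  have bwd : ∀ X Y, P2Core env AH L L' P1 P2 X Y → ∀ act Y', Trans env Y act Y' →
      (act = none ∧ (P2Core env AH L L' P1 P2 X Y' ∨ P2Core env AH L L' P1 P2 Y' X)) ∨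
      (∃ Xb X', TauStar (Trans env) X Xb ∧ Trans env Xb act X' ∧
        (P2Core env AH L L' P1 P2 Xb Y ∨ P2Core env AH L L' P1 P2 Y Xb) ∧
        (P2Core env AH L L' P1 P2 X' Y' ∨ P2Core env AH L L' P1 P2 Y' X')) := by
    rintro X Y ⟨s1, s2, u1, u2, qt, rfl, rfl, hr1, hr2, hq, h1, h2⟩ act Y' hstep
    obtain ⟨m1, rfl, hm1, hnAH⟩ := trans_restrict_inv hstep
    obtain ⟨m2, rfl, hcase⟩ := trans_hide_inv hm1
    rcases hcase with ⟨x, hxL', rfl, hs2⟩ | ⟨hs2, hn2⟩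
    · -- hidden sync between the pair and the tester
      cases hs2 with
      | parL hsM hn => exact absurd hxL' (hn _ rfl)
      | parR hsq hn => exact absurd hxL' (hn _ rfl)
      | @sync _ _ _ _ M' qt' hsM hsq hxx =>
        have hxAH : x ∈ AH := hL' hxL'
        have hq' : HighOnly env AH qt' := highOnly_step hq hsq
        cases hsM with
        | @parL _ _ _ _ u1' hsu hnLx =>
          rcases unwinding hxAH (hP1 u1 hr1) hsu with heq | ⟨v, v', htv, hsv, hmv, hfv⟩
          · exact Or.inl ⟨rfl, Or.inl ⟨s1, s2, u1', u2, qt', rfl, rfl, reach_step hr1 hsu,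
              hr2, hq', brBisim_trans h1 heq, h2⟩⟩
          · obtain ⟨S0, htS0, hvS0⟩ := brBisim_follow (brBisim_symm h1) (tauStar_restrict_lift htv)
            obtain ⟨sg, rfl, htsg⟩ := tauStar_restrict_inv htS0
            have hsgu1 : BrBisim (Trans env) (.restrict sg AH) (.restrict u1 AH) :=
              brBisim_trans (brBisim_symm hvS0) hmv
            rcases brBisim_game hvS0 (Trans.res hsv (fun _ hx => nomatch hx)) with ⟨-, hB⟩ |
              ⟨Sb2, S2', htau2, hstep3, hmid2, hfin2⟩
            · have hend : BrBisim (Trans env) (.restrict sg AH) (.restrict u1' AH) :=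
                brBisim_trans (brBisim_symm hB) hfv
              rcases Relation.ReflTransGen.cases_tail htsg with heqsg | ⟨sp, htsp, hlast⟩
              · subst heqsg
                exact Or.inl ⟨rfl, Or.inl ⟨sg, s2, u1', u2, qt', rfl, rfl,
                  reach_step hr1 hsu, hr2, hq', hend, h2⟩⟩
              · have hmidsp : BrBisim (Trans env) (.restrict sp AH) (.restrict u1 AH) :=
                  brBisim_stutter h1 (tauStar_restrict_lift htsp)
                    (Relation.ReflTransGen.single
                      (Trans.res hlast (fun _ hx => nomatch hx))) hsgu1
                refine Or.inr ⟨.restrict (.par L sp s2) AH, .restrict (.par L sg s2) AH,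
                  rtgLift (fun y => Proc.restrict (Proc.par L y s2) AH)
                    (fun _ _ hs => Trans.res (Trans.parL hs (fun _ hx => nomatch hx))
                      (fun _ hx => nomatch hx)) htsp,
                  Trans.res (Trans.parL hlast (fun _ hx => nomatch hx))
                    (fun _ hx => nomatch hx),
                  Or.inl ⟨sp, s2, u1, u2, qt, rfl, rfl, hr1, hr2, hq, hmidsp, h2⟩,
                  Or.inl ⟨sg, s2, u1', u2, qt', rfl, rfl, reach_step hr1 hsu, hr2, hq',
                    hend, h2⟩⟩
            · obtain ⟨rho, rfl, htrho⟩ := tauStar_restrict_inv htau2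
              obtain ⟨rho', rfl, hsrho, -⟩ := trans_restrict_inv hstep3
              have hmidrho : BrBisim (Trans env) (.restrict rho AH) (.restrict u1 AH) :=
                brBisim_trans (brBisim_symm hmid2) hmv
              have hfinrho : BrBisim (Trans env) (.restrict rho' AH) (.restrict u1' AH) :=
                brBisim_trans (brBisim_symm hfin2) hfv
              refine Or.inr ⟨.restrict (.par L rho s2) AH, .restrict (.par L rho' s2) AH,
                rtgLift (fun y => Proc.restrict (Proc.par L y s2) AH)
                  (fun _ _ hs => Trans.res (Trans.parL hs (fun _ hx => nomatch hx))
                    (fun _ hx => nomatch hx)) (htsg.trans htrho),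
                Trans.res (Trans.parL hsrho (fun _ hx => nomatch hx))
                  (fun _ hx => nomatch hx),
                Or.inl ⟨rho, s2, u1, u2, qt, rfl, rfl, hr1, hr2, hq, hmidrho, h2⟩,
                Or.inl ⟨rho', s2, u1', u2, qt', rfl, rfl, reach_step hr1 hsu, hr2, hq',
                  hfinrho, h2⟩⟩
        | @parR _ _ _ _ u2' hsu hnLx =>
          rcases unwinding hxAH (hP2 u2 hr2) hsu with heq | ⟨v, v', htv, hsv, hmv, hfv⟩
          · exact Or.inl ⟨rfl, Or.inl ⟨s1, s2, u1, u2', qt', rfl, rfl, hr1,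
              reach_step hr2 hsu, hq', h1, brBisim_trans h2 heq⟩⟩
          · obtain ⟨S0, htS0, hvS0⟩ := brBisim_follow (brBisim_symm h2) (tauStar_restrict_lift htv)
            obtain ⟨sg, rfl, htsg⟩ := tauStar_restrict_inv htS0
            have hsgu2 : BrBisim (Trans env) (.restrict sg AH) (.restrict u2 AH) :=
              brBisim_trans (brBisim_symm hvS0) hmv
            rcases brBisim_game hvS0 (Trans.res hsv (fun _ hx => nomatch hx)) with ⟨-, hB⟩ |
              ⟨Sb2, S2', htau2, hstep3, hmid2, hfin2⟩
            · have hend : BrBisim (Trans env) (.restrict sg AH) (.restrict u2' AH) :=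
                brBisim_trans (brBisim_symm hB) hfv
              rcases Relation.ReflTransGen.cases_tail htsg with heqsg | ⟨sp, htsp, hlast⟩
              · subst heqsg
                exact Or.inl ⟨rfl, Or.inl ⟨s1, sg, u1, u2', qt', rfl, rfl, hr1,
                  reach_step hr2 hsu, hq', h1, hend⟩⟩
              · have hmidsp : BrBisim (Trans env) (.restrict sp AH) (.restrict u2 AH) :=
                  brBisim_stutter h2 (tauStar_restrict_lift htsp)
                    (Relation.ReflTransGen.single
                      (Trans.res hlast (fun _ hx => nomatch hx))) hsgu2
                refine Or.inr ⟨.restrict (.par L s1 sp) AH, .restrict (.par L s1 sg) AH,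
                  rtgLift (fun y => Proc.restrict (Proc.par L s1 y) AH)
                    (fun _ _ hs => Trans.res (Trans.parR hs (fun _ hx => nomatch hx))
                      (fun _ hx => nomatch hx)) htsp,
                  Trans.res (Trans.parR hlast (fun _ hx => nomatch hx))
                    (fun _ hx => nomatch hx),
                  Or.inl ⟨s1, sp, u1, u2, qt, rfl, rfl, hr1, hr2, hq, h1, hmidsp⟩,
                  Or.inl ⟨s1, sg, u1, u2', qt', rfl, rfl, hr1, reach_step hr2 hsu, hq',
                    h1, hend⟩⟩
            · obtain ⟨rho, rfl, htrho⟩ := tauStar_restrict_inv htau2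
              obtain ⟨rho', rfl, hsrho, -⟩ := trans_restrict_inv hstep3
              have hmidrho : BrBisim (Trans env) (.restrict rho AH) (.restrict u2 AH) :=
                brBisim_trans (brBisim_symm hmid2) hmv
              have hfinrho : BrBisim (Trans env) (.restrict rho' AH) (.restrict u2' AH) :=
                brBisim_trans (brBisim_symm hfin2) hfv
              refine Or.inr ⟨.restrict (.par L s1 rho) AH, .restrict (.par L s1 rho') AH,
                rtgLift (fun y => Proc.restrict (Proc.par L s1 y) AH)
                  (fun _ _ hs => Trans.res (Trans.parR hs (fun _ hx => nomatch hx))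
                    (fun _ hx => nomatch hx)) (htsg.trans htrho),
                Trans.res (Trans.parR hsrho (fun _ hx => nomatch hx))
                  (fun _ hx => nomatch hx),
                Or.inl ⟨s1, rho, u1, u2, qt, rfl, rfl, hr1, hr2, hq, h1, hmidrho⟩,
                Or.inl ⟨s1, rho', u1, u2', qt', rfl, rfl, hr1, reach_step hr2 hsu, hq',
                  h1, hfinrho⟩⟩
        | sync hsu1 hsu2 hxL => exact absurd hxAH (hL _ hxL)
    · -- visible (or internal) action not involving the tester
      cases hs2 with
      | @parL _ _ _ _ M' hsM hnL'2 =>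
        cases hsM with
        | @parL _ _ _ _ u1' hsu hnLx =>
          rcases brBisim_game (brBisim_symm h1) (Trans.res hsu hnAH) with ⟨rfl, hB⟩ |
            ⟨Sb, S', htau, hstep2, hmid, hfin⟩
          · exact Or.inl ⟨rfl, Or.inl ⟨s1, s2, u1', u2, qt, rfl, rfl, reach_step hr1 hsu,
              hr2, hq, brBisim_symm hB, h2⟩⟩
          · obtain ⟨sb, rfl, htsb⟩ := tauStar_restrict_inv htau
            obtain ⟨s1', rfl, hss, hns⟩ := trans_restrict_inv hstep2
            refine Or.inr ⟨.restrict (.par L sb s2) AH, .restrict (.par L s1' s2) AH,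
              rtgLift (fun y => Proc.restrict (Proc.par L y s2) AH)
                (fun _ _ hs => Trans.res (Trans.parL hs (fun _ hx => nomatch hx))
                  (fun _ hx => nomatch hx)) htsb,
              Trans.res (Trans.parL hss hnLx) hns,
              Or.inl ⟨sb, s2, u1, u2, qt, rfl, rfl, hr1, hr2, hq, brBisim_symm hmid, h2⟩,
              Or.inl ⟨s1', s2, u1', u2, qt, rfl, rfl, reach_step hr1 hsu, hr2, hq,
                brBisim_symm hfin, h2⟩⟩
        | @parR _ _ _ _ u2' hsu hnLx =>
          rcases brBisim_game (brBisim_symm h2) (Trans.res hsu hnAH) with ⟨rfl, hB⟩ |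
            ⟨Sb, S', htau, hstep2, hmid, hfin⟩
          · exact Or.inl ⟨rfl, Or.inl ⟨s1, s2, u1, u2', qt, rfl, rfl, hr1,
              reach_step hr2 hsu, hq, h1, brBisim_symm hB⟩⟩
          · obtain ⟨sb, rfl, htsb⟩ := tauStar_restrict_inv htau
            obtain ⟨s2', rfl, hss, hns⟩ := trans_restrict_inv hstep2
            refine Or.inr ⟨.restrict (.par L s1 sb) AH, .restrict (.par L s1 s2') AH,
              rtgLift (fun y => Proc.restrict (Proc.par L s1 y) AH)
                (fun _ _ hs => Trans.res (Trans.parR hs (fun _ hx => nomatch hx))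
                  (fun _ hx => nomatch hx)) htsb,
              Trans.res (Trans.parR hss hnLx) hns,
              Or.inl ⟨s1, sb, u1, u2, qt, rfl, rfl, hr1, hr2, hq, h1, brBisim_symm hmid⟩,
              Or.inl ⟨s1, s2', u1, u2', qt, rfl, rfl, hr1, reach_step hr2 hsu, hq,
                h1, brBisim_symm hfin⟩⟩
        | @sync _ _ _ x u1' u2' hsu1 hsu2 hxL =>
          rcases brBisim_game (brBisim_symm h1) (Trans.res hsu1 hnAH) with ⟨h', -⟩ |
            ⟨Sa, Sa', hta, hsa2, hmida, hfina⟩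
          · exact absurd h' (by simp)
          rcases brBisim_game (brBisim_symm h2) (Trans.res hsu2 hnAH) with ⟨h', -⟩ |
            ⟨Sb, Sb', htb, hsb2, hmidb, hfinb⟩
          · exact absurd h' (by simp)
          obtain ⟨sa, rfl, htsa⟩ := tauStar_restrict_inv hta
          obtain ⟨s1', rfl, hssa, hnsa⟩ := trans_restrict_inv hsa2
          obtain ⟨sb, rfl, htsb⟩ := tauStar_restrict_inv htb
          obtain ⟨s2', rfl, hssb, hnsb⟩ := trans_restrict_inv hsb2
          have l1 : TauStar (Trans env) (.restrict (.par L s1 s2) AH)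
              (.restrict (.par L sa s2) AH) :=
            rtgLift (fun y => Proc.restrict (Proc.par L y s2) AH)
              (fun _ _ hs => Trans.res (Trans.parL hs (fun _ hx => nomatch hx))
                (fun _ hx => nomatch hx)) htsa
          have l2 : TauStar (Trans env) (.restrict (.par L sa s2) AH)
              (.restrict (.par L sa sb) AH) :=
            rtgLift (fun y => Proc.restrict (Proc.par L sa y) AH)
              (fun _ _ hs => Trans.res (Trans.parR hs (fun _ hx => nomatch hx))
                (fun _ hx => nomatch hx)) htsb
          refine Or.inr ⟨_, _, l1.trans l2, Trans.res (Trans.sync hssa hssb hxL) hnsa,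
            Or.inl ⟨sa, sb, u1, u2, qt, rfl, rfl, hr1, hr2, hq,
              brBisim_symm hmida, brBisim_symm hmidb⟩,
            Or.inl ⟨s1', s2', u1', u2', qt, rfl, rfl, reach_step hr1 hsu1,
              reach_step hr2 hsu2, hq, brBisim_symm hfina, brBisim_symm hfinb⟩⟩
      | parR hsq hn =>
        obtain ⟨hh, hhAH, rfl⟩ := hq qt Relation.ReflTransGen.refl act _ hsq
        exact absurd hhAH (hnAH _ rfl)
      | sync hsM hsq hxx => exact absurd hxx (hn2 _ rfl)
  rintro X Y (hc | hc) act s' hstep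
  · rcases fwd X Y hc act s' hstep with ⟨rfl, h'⟩ | ⟨Yb, Y', ht, hs, hm, hf⟩
    · exact Or.inl ⟨rfl, h'⟩
    · exact Or.inr ⟨Yb, Y', ht, hs, hm, hf⟩
  · rcases bwd Y X hc act s' hstep with ⟨rfl, h'⟩ | ⟨Xb, X', ht, hs, hm, hf⟩
    · exact Or.inl ⟨rfl, by tauto⟩
    · exact Or.inr ⟨Xb, X', ht, hs, by tauto, by tauto⟩

lemma pbrndc_par {L : Set A} {P1 P2 : Proc A C} (hL : ∀ x ∈ L, x ∉ AH)
    (h1 : PBrNDC env AH P1) (h2 : PBrNDC env AH P2) : PBrNDC env AH (.par L P1 P2) := by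
  intro p' hr q hq L' hL'
  obtain ⟨u1, u2, rfl, hr1, hr2⟩ := reach_par hr
  exact ⟨fun X Y => P2Core env AH L L' P1 P2 X Y ∨ P2Core env AH L L' P1 P2 Y X,
    isBB_p2 hL hL' h1 h2,
    Or.inl ⟨u1, u2, u1, u2, q, rfl, rfl, hr1, hr2, hq, brBisim_refl _, brBisim_refl _⟩⟩

end Part2

/-- compositionality w.r.t. parallel composition: SBrSNNI and
P_BrNDC for `L ⊆ A_L`, SBrNDC for every `L ⊆ A`. -/
theorem par_compositionality {A C : Type} (env : C → Proc A C)
    (hguard : ∀ c, Guarded (env c)) (AH : Set A) (P1 P2 : Proc A C) :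
    (∀ L : Set A, (∀ x ∈ L, x ∉ AH) →
      SBrSNNI env AH P1 → SBrSNNI env AH P2 → SBrSNNI env AH (Proc.par L P1 P2)) ∧
    (∀ L : Set A, (∀ x ∈ L, x ∉ AH) →
      PBrNDC env AH P1 → PBrNDC env AH P2 → PBrNDC env AH (Proc.par L P1 P2)) ∧
    (∀ L : Set A,
      SBrNDC env AH P1 → SBrNDC env AH P2 → SBrNDC env AH (Proc.par L P1 P2)) :=
  ⟨fun _ hdisj h1 h2 => sbrsnni_par hdisj h1 h2,
   fun _ hdisj h1 h2 => pbrndc_par hdisj h1 h2,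
   fun _ h1 h2 => sbrndc_par h1 h2⟩

end SecurityNI
end

section
/- Let 𝒫 be any of the properties SBrSNNI, P_BrNDC, SBrNDC. If P ∈ 𝒫, then P/L ∈ 𝒫 for every L ⊆ A_L (compositionality with respect to hiding of low-level actions). -/
/-! Hiding `L` is the relabelling that turns every visible `x ∈ L` into `τ`, and relabellings
preserve branching bisimilarity. Because `L` is disjoint from `A_H`, the operator `/L` passes,
up to strong bisimilarity, through the observation contexts `·∖A_H`, `·/A_H` and
`((· ∥_{L'} Q)/L')∖A_H` (for high-level `Q` and `L' ⊆ A_H`, which never synchronise on `L`).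
So every branching bisimilarity witnessing the property at some `P'` transports to the one
required at `P'/L`, and the processes reachable from `P/L` are exactly the `P'/L` with `P'`
reachable from `P`. -/

namespace SecurityNI

variable {A C : Type}

section Relabel

variable {S T : Type}

def relabel (φ : Option A → Option A) (tr : S → Option A → S → Prop) :
    S → Option A → S → Prop :=
  fun s a s' => ∃ b, φ b = a ∧ tr s b s'

def IsStrongBisim (tr : S → Option A → S → Prop) (tr' : T → Option A → T → Prop)
    (R : S → T → Prop) : Prop :=
  (∀ s u a s', R s u → tr s a s' → ∃ u', tr' u a u' ∧ R s' u') ∧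
    (∀ s u a u', R s u → tr' u a u' → ∃ s', tr s a s' ∧ R s' u')

variable {tr : S → Option A → S → Prop} {tr' : T → Option A → T → Prop}

theorem TauStar.relabel {φ : Option A → Option A} (hφ : φ none = none) {s t : S}
    (h : TauStar tr s t) : TauStar (relabel φ tr) s t :=
  Relation.ReflTransGen.mono (fun _ _ hst => ⟨none, hφ, hst⟩) _ _ h

theorem BrBisim.relabel {φ : Option A → Option A} (hφ : φ none = none) {s t : S}
    (h : BrBisim tr s t) : BrBisim (relabel φ tr) s t := by
  obtain ⟨B, ⟨hBsymm, hB⟩, hst⟩ := h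
  refine ⟨B, ⟨hBsymm, ?_⟩, hst⟩
  rintro s1 s2 hs a s1' ⟨b, rfl, hstep⟩
  rcases hB s1 s2 hs b s1' hstep with ⟨rfl, hB'⟩ | ⟨s2b, s2', hτ, hstep', hb, hb'⟩
  · exact Or.inl ⟨hφ, hB'⟩
  · exact Or.inr ⟨s2b, s2', hτ.relabel hφ, ⟨b, rfl, hstep'⟩, hb, hb'⟩

namespace IsStrongBisim

variable {R R' : S → T → Prop}

theorem sup (hR : IsStrongBisim tr tr' R) (hR' : IsStrongBisim tr tr' R') :
    IsStrongBisim tr tr' (R ⊔ R') := by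
  constructor
  · rintro s u a s' (h | h) hstep
    · obtain ⟨u', hu, h'⟩ := hR.1 s u a s' h hstep
      exact ⟨u', hu, Or.inl h'⟩
    · obtain ⟨u', hu, h'⟩ := hR'.1 s u a s' h hstep
      exact ⟨u', hu, Or.inr h'⟩
  · rintro s u a u' (h | h) hstep
    · obtain ⟨s', hs, h'⟩ := hR.2 s u a u' h hstep
      exact ⟨s', hs, Or.inl h'⟩
    · obtain ⟨s', hs, h'⟩ := hR'.2 s u a u' h hstep
      exact ⟨s', hs, Or.inr h'⟩

theorem tauStar (hR : IsStrongBisim tr tr' R) {s s' : S} {u : T} (hsu : R s u)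
    (h : TauStar tr s s') : ∃ u', TauStar tr' u u' ∧ R s' u' := by
  induction h with
  | refl => exact ⟨u, .refl, hsu⟩
  | tail _ hstep ih =>
    obtain ⟨u1, hτ, h1⟩ := ih
    obtain ⟨u2, hstep', h2⟩ := hR.1 _ _ _ _ h1 hstep
    exact ⟨u2, hτ.tail hstep', h2⟩

theorem brBisim (hR : IsStrongBisim tr tr' R) {s t : S} {u v : T} (hsu : R s u) (htv : R t v)
    (h : BrBisim tr s t) : BrBisim tr' u v := by
  obtain ⟨B, ⟨hBsymm, hB⟩, hst⟩ := h
  refine ⟨fun u v => ∃ s t, R s u ∧ R t v ∧ B s t,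
    ⟨fun u v ⟨s, t, hs, ht, hst⟩ => ⟨t, s, ht, hs, hBsymm hst⟩, ?_⟩, ⟨s, t, hsu, htv, hst⟩⟩
  rintro u v ⟨s, t, hsu, htv, hst⟩ a u' hstep
  obtain ⟨s', hs, hsu'⟩ := hR.2 _ _ _ _ hsu hstep
  rcases hB s t hst a s' hs with ⟨rfl, hB'⟩ | ⟨t1, t2, hτ, ht, hb, hb'⟩
  · exact Or.inl ⟨rfl, s', t, hsu', htv, hB'⟩
  · obtain ⟨v1, hτ', hv1⟩ := hR.tauStar htv hτ
    obtain ⟨v2, hv, hv2⟩ := hR.1 _ _ _ _ hv1 ht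
    exact Or.inr ⟨v1, v2, hτ', hv, ⟨s, t1, hsu, hv1, hb⟩, ⟨s', t2, hsu', hv2, hb'⟩⟩

end IsStrongBisim

end Relabel

section HideLabel

open Classical in
noncomputable def hideLabel (L : Set A) : Option A → Option A
  | none => none
  | some x => if x ∈ L then none else some x

variable {L M : Set A} {a : Option A} {x : A}

@[simp]
theorem hideLabel_none : hideLabel L none = none := rfl

@[simp]
theorem hideLabel_some_of_mem (hx : x ∈ L) : hideLabel L (some x) = none := by
  classical
  simp [hideLabel, hx]

@[simp]
theorem hideLabel_some_of_notMem (hx : x ∉ L) : hideLabel L (some x) = some x := by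
  classical
  simp [hideLabel, hx]

theorem hideLabel_eq_some : hideLabel L a = some x ↔ a = some x ∧ x ∉ L := by
  rcases a with _ | y
  · simp
  · by_cases hy : y ∈ L
    · simp only [hideLabel_some_of_mem hy, reduceCtorEq, false_iff, not_and, not_not]
      rintro ⟨⟩; exact hy
    · simp only [hideLabel_some_of_notMem hy, Option.some.injEq]
      exact ⟨by rintro rfl; exact ⟨rfl, hy⟩, fun h => h.1⟩

theorem hideLabel_comm : hideLabel L (hideLabel M a) = hideLabel M (hideLabel L a) := by
  rcases a with _ | y
  · rfl
  · by_cases hL : y ∈ L <;> by_cases hM : y ∈ M <;> simp [hL, hM]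

theorem notMem_of_hideLabel_eq_some (hn : ∀ x, a = some x → x ∉ M) :
    ∀ x, hideLabel L a = some x → x ∉ M :=
  fun x hx => hn x (hideLabel_eq_some.1 hx).1

theorem notMem_of_hideLabel_disjoint (hLM : Disjoint L M)
    (hn : ∀ x, hideLabel L a = some x → x ∉ M) : ∀ x, a = some x → x ∉ M := by
  rintro x rfl hxM
  by_cases hxL : x ∈ L
  · exact Set.disjoint_left.1 hLM hxL hxM
  · exact hn x (hideLabel_eq_some.2 ⟨rfl, hxL⟩) hxM

end HideLabel

section Hiding

variable {env : C → Proc A C} {L M AH : Set A} {p u : Proc A C} {a : Option A}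

theorem Trans.hide_hideLabel {p' : Proc A C} (h : Trans env p a p') :
    Trans env (.hide p L) (hideLabel L a) (.hide p' L) := by
  rcases a with _ | x
  · exact .hideOut h (fun _ hx => nomatch hx)
  · by_cases hx : x ∈ L
    · simpa [hx] using Trans.hideIn h hx
    · simpa [hx] using Trans.hideOut h (fun y hy => by cases hy; exact hx)

theorem trans_hide_iff :
    Trans env (.hide p L) a u ↔ ∃ b p', hideLabel L b = a ∧ Trans env p b p' ∧ u = .hide p' L := by
  constructor
  · intro h
    cases h with
    | hideIn h hx => exact ⟨_, _, hideLabel_some_of_mem hx, h, rfl⟩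
    | hideOut h hn =>
      refine ⟨a, _, ?_, h, rfl⟩
      rcases a with _ | x
      · rfl
      · exact hideLabel_some_of_notMem (hn x rfl)
  · rintro ⟨b, p', rfl, h, rfl⟩
    exact h.hide_hideLabel

theorem trans_restrict_iff :
    Trans env (.restrict p M) a u ↔
      ∃ p', Trans env p a p' ∧ (∀ x, a = some x → x ∉ M) ∧ u = .restrict p' M := by
  constructor
  · intro h
    cases h with
    | res h hn => exact ⟨_, h, hn, rfl⟩
  · rintro ⟨p', h, hn, rfl⟩
    exact .res h hn

theorem eq_hide_of_reach_hide {P : Proc A C} (h : Reach (Trans env) (.hide P L) u) :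
    ∃ Q, u = .hide Q L ∧ Reach (Trans env) P Q := by
  induction h with
  | refl => exact ⟨P, rfl, .refl⟩
  | tail _ hstep ih =>
    obtain ⟨Q, rfl, hQ⟩ := ih
    obtain ⟨a, hstep⟩ := hstep
    obtain ⟨b, Q', -, h, rfl⟩ := trans_hide_iff.1 hstep
    exact ⟨Q', rfl, hQ.tail ⟨b, h⟩⟩

inductive HideInside (AH L : Set A) : Proc A C → Proc A C → Prop
  | restrict (p : Proc A C) : HideInside AH L (.restrict p AH) (.restrict (.hide p L) AH)
  | hide (p : Proc A C) : HideInside AH L (.hide p AH) (.hide (.hide p L) AH)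

theorem isStrongBisim_hideInside (hL : Disjoint L AH) :
    IsStrongBisim (relabel (hideLabel L) (Trans env)) (Trans env) (HideInside AH L) := by
  constructor
  · rintro _ _ _ s' (p | p) ⟨b, rfl, hs⟩
    · obtain ⟨p', hp, hn, rfl⟩ := trans_restrict_iff.1 hs
      exact ⟨_, .res hp.hide_hideLabel (notMem_of_hideLabel_eq_some hn), .restrict p'⟩
    · obtain ⟨c, p', rfl, hp, rfl⟩ := trans_hide_iff.1 hs
      refine ⟨_, ?_, .hide p'⟩
      rw [hideLabel_comm]
      exact hp.hide_hideLabel.hide_hideLabel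
  · rintro _ _ a u' (p | p) hu
    · obtain ⟨w, hw, hn, rfl⟩ := trans_restrict_iff.1 hu
      obtain ⟨b, p', rfl, hp, rfl⟩ := trans_hide_iff.1 hw
      exact ⟨_, ⟨b, rfl, .res hp (notMem_of_hideLabel_disjoint hL hn)⟩, .restrict p'⟩
    · obtain ⟨b, w, rfl, hw, rfl⟩ := trans_hide_iff.1 hu
      obtain ⟨c, p', rfl, hp, rfl⟩ := trans_hide_iff.1 hw
      exact ⟨_, ⟨hideLabel AH c, hideLabel_comm, hp.hide_hideLabel⟩, .hide p'⟩

inductive HideUnderPar (env : C → Proc A C) (AH L L' : Set A) (q₀ : Proc A C) :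
    Proc A C → Proc A C → Prop
  | mk (p q : Proc A C) (hq : Reach (Trans env) q₀ q) :
      HideUnderPar env AH L L' q₀ (.restrict (.hide (.par L' p q) L') AH)
        (.restrict (.hide (.par L' (.hide p L) q) L') AH)

theorem isStrongBisim_hideUnderPar {L' : Set A} {q₀ : Proc A C} (hL : Disjoint L AH)
    (hL' : L' ⊆ AH) (hq₀ : HighOnly env AH q₀) :
    IsStrongBisim (relabel (hideLabel L) (Trans env)) (Trans env)
      (HideUnderPar env AH L L' q₀) := by
  constructor
  · rintro _ _ _ s' ⟨p, q, hq⟩ ⟨b, rfl, hs⟩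
    obtain ⟨w, hw, hn, rfl⟩ := trans_restrict_iff.1 hs
    obtain ⟨c, w', rfl, hw', rfl⟩ := trans_hide_iff.1 hw
    have close : ∀ p' q', Reach (Trans env) q₀ q' →
        Trans env (.par L' (.hide p L) q) (hideLabel L c) (.par L' (.hide p' L) q') →
        ∃ u', Trans env (.restrict (.hide (.par L' (.hide p L) q) L') AH)
            (hideLabel L (hideLabel L' c)) u' ∧
          HideUnderPar env AH L L' q₀ (.restrict (.hide (.par L' p' q') L') AH) u' :=
      fun p' q' hq' h => ⟨_, .res (hideLabel_comm ▸ h.hide_hideLabel)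
        (notMem_of_hideLabel_eq_some hn), .mk p' q' hq'⟩
    cases hw' with
    | parL hp hnc =>
      exact close _ _ hq (.parL hp.hide_hideLabel (notMem_of_hideLabel_eq_some hnc))
    | parR hq' hnc =>
      obtain ⟨h, hh, rfl⟩ := hq₀ q hq _ _ hq'
      exact absurd hh (hn h (hideLabel_some_of_notMem (hnc h rfl)))
    | sync hp hq' hx =>
      have hxL := Set.disjoint_right.1 hL (hL' hx)
      refine close _ _ (hq.tail ⟨_, hq'⟩) ?_
      rw [hideLabel_some_of_notMem hxL]
      exact .sync (hideLabel_some_of_notMem hxL ▸ hp.hide_hideLabel) hq' hx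
  · rintro _ _ a u' ⟨p, q, hq⟩ hu
    obtain ⟨w, hw, hn, rfl⟩ := trans_restrict_iff.1 hu
    obtain ⟨b, w', rfl, hw', rfl⟩ := trans_hide_iff.1 hw
    have close : ∀ c p' q', Reach (Trans env) q₀ q' → hideLabel L c = b →
        Trans env (.par L' p q) c (.par L' p' q') →
        ∃ s', relabel (hideLabel L) (Trans env) (.restrict (.hide (.par L' p q) L') AH)
            (hideLabel L' b) s' ∧
          HideUnderPar env AH L L' q₀ s' (.restrict (.hide (.par L' (.hide p' L) q') L') AH) := by
      rintro c p' q' hq' rfl h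
      have hnc := notMem_of_hideLabel_disjoint hL (hideLabel_comm ▸ hn)
      exact ⟨_, ⟨hideLabel L' c, hideLabel_comm, .res h.hide_hideLabel hnc⟩, .mk p' q' hq'⟩
    cases hw' with
    | parL hp hnb =>
      obtain ⟨c, p', rfl, hpc, rfl⟩ := trans_hide_iff.1 hp
      exact close c p' q hq rfl (.parL hpc (notMem_of_hideLabel_disjoint (hL.mono_right hL') hnb))
    | parR hq' hnb =>
      obtain ⟨h, hh, rfl⟩ := hq₀ q hq _ _ hq'
      exact absurd hh (hn h (hideLabel_some_of_notMem (hnb h rfl)))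
    | sync hp hq' hx =>
      obtain ⟨c, p', hc, hpc, rfl⟩ := trans_hide_iff.1 hp
      obtain ⟨rfl, -⟩ := hideLabel_eq_some.1 hc
      exact close _ p' _ (hq.tail ⟨_, hq'⟩) hc (.sync hpc hq' hx)

end Hiding

theorem hide_compositionality_general {A C : Type} (env : C → Proc A C)
    (AH : Set A) (P : Proc A C)
    (L : Set A) (hL : ∀ x ∈ L, x ∉ AH) :
    (SBrSNNI env AH P → SBrSNNI env AH (Proc.hide P L)) ∧
    (PBrNDC env AH P → PBrNDC env AH (Proc.hide P L)) ∧
    (SBrNDC env AH P → SBrNDC env AH (Proc.hide P L)) := by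
  have hLAH : Disjoint L AH := Set.disjoint_left.2 hL
  have hideInside := isStrongBisim_hideInside (env := env) hLAH
  refine ⟨fun hP _ hreach => ?_, fun hP _ hreach => ?_, fun hP _ p'' hreach h hh hstep => ?_⟩
  all_goals obtain ⟨Q, rfl, hQ⟩ := eq_hide_of_reach_hide hreach
  · exact hideInside.brBisim (.restrict Q) (.hide Q) ((hP Q hQ).relabel rfl)
  · intro q hq L' hL'
    exact (hideInside.sup (isStrongBisim_hideUnderPar hLAH hL' hq)).brBisim
      (Or.inl (.restrict Q)) (Or.inr (.mk Q q .refl)) ((hP Q hQ q hq L' hL').relabel rfl)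
  · obtain ⟨b, Q'', hb, hQ'', rfl⟩ := trans_hide_iff.1 hstep
    obtain ⟨rfl, -⟩ := hideLabel_eq_some.1 hb
    exact hideInside.brBisim (.restrict Q) (.restrict Q'') ((hP Q Q'' hQ h hh hQ'').relabel rfl)

/-- SBrSNNI, P_BrNDC and SBrNDC are compositional w.r.t.
hiding of low-level actions (`L ⊆ A_L`). -/
theorem hide_compositionality {A C : Type} (env : C → Proc A C)
    (hguard : ∀ c, Guarded (env c)) (AH : Set A) (P : Proc A C)
    (L : Set A) (hL : ∀ x ∈ L, x ∉ AH) :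
    (SBrSNNI env AH P → SBrSNNI env AH (Proc.hide P L)) ∧
    (PBrNDC env AH P → PBrNDC env AH (Proc.hide P L)) ∧
    (SBrNDC env AH P → SBrNDC env AH (Proc.hide P L)) :=
  hide_compositionality_general env AH P L hL

end SecurityNI
end

section
/- If P ∈ SBrNDC, P' ∈ reach(P), and P'/A_H ⟹τ* P''/A_H (i.e., P''/A_H is reachable from P'/A_H via finitely many τ-transitions), then there exists P̂'' such that P'∖A_H ⟹τ* P̂''∖A_H and P''∖A_H ≈_b P̂''∖A_H. -/
namespace SecurityNI

variable {A C : Type}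

/-!
Follow the τ-path of `P' / A_H` backwards from `P''`. A τ-step of the underlying process survives
restriction. A hidden high step `Q --h→ Q₁` gives `Q ∖ A_H ≈_b Q₁ ∖ A_H` by SBrNDC, so the τ-path
already built from `Q₁ ∖ A_H` can be transferred along `≈_b` to one from `Q ∖ A_H`. Gluing the
steps needs transitivity of `≈_b`, which goes through Basten's semi-branching bisimilarity: it is
transitive by a direct composition argument, and by stuttering it is itself a branching bisimulation.
-/

section SemiBranching

variable {S : Type} (tr : S → Option A → S → Prop)

/-- Basten's semi-branching transfer condition: unlike the branching one, it lets a τ-step be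
answered by an arbitrary τ-path. -/
def SemiBrMatch (B : S → S → Prop) (s1 s2 : S) (a : Option A) (s1' : S) : Prop :=
  (a = none ∧ ∃ s2', TauStar tr s2 s2' ∧ B s1 s2' ∧ B s1' s2') ∨
    ∃ s2b s2', TauStar tr s2 s2b ∧ tr s2b a s2' ∧ B s1 s2b ∧ B s1' s2'

def IsSemiBrBisim (B : S → S → Prop) : Prop :=
  (∀ ⦃s t⦄, B s t → B t s) ∧
    ∀ s1 s2, B s1 s2 → ∀ a s1', tr s1 a s1' → SemiBrMatch tr B s1 s2 a s1'

def SemiBrBisim (s1 s2 : S) : Prop :=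
  ∃ B, IsSemiBrBisim tr B ∧ B s1 s2

variable {tr}

namespace SemiBrMatch

variable {B : S → S → Prop} {s1 s2 s1' : S} {a : Option A}

theorem mono {B' : S → S → Prop} (h : SemiBrMatch tr B s1 s2 a s1')
    (hBB' : ∀ s t, B s t → B' s t) : SemiBrMatch tr B' s1 s2 a s1' := by
  rcases h with ⟨ha, s2', h2, h1, h1'⟩ | ⟨s2b, s2', h2, hstep, h1, h1'⟩
  · exact .inl ⟨ha, s2', h2, hBB' _ _ h1, hBB' _ _ h1'⟩
  · exact .inr ⟨s2b, s2', h2, hstep, hBB' _ _ h1, hBB' _ _ h1'⟩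

theorem of_tauStar {t : S} (h : SemiBrMatch tr B s1 s2 a s1') (ht : TauStar tr t s2) :
    SemiBrMatch tr B s1 t a s1' := by
  rcases h with ⟨ha, s2', h2, h1, h1'⟩ | ⟨s2b, s2', h2, hstep, h1, h1'⟩
  · exact .inl ⟨ha, s2', Relation.ReflTransGen.trans ht h2, h1, h1'⟩
  · exact .inr ⟨s2b, s2', Relation.ReflTransGen.trans ht h2, hstep, h1, h1'⟩

end SemiBrMatch

theorem IsBranchingBisim.isSemiBrBisim {B : S → S → Prop} (h : IsBranchingBisim tr B) :
    IsSemiBrBisim tr B :=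
  ⟨fun _ _ hst => h.1 hst, fun s1 s2 hB a s1' hs =>
    (h.2 s1 s2 hB a s1' hs).imp (fun ⟨ha, h'⟩ => ⟨ha, s2, .refl, hB, h'⟩) id⟩

theorem IsSemiBrBisim.exists_tauStar {B : S → S → Prop} (hB : IsSemiBrBisim tr B) {t u t' : S}
    (h : B t u) (ht : TauStar tr t t') : ∃ u', TauStar tr u u' ∧ B t' u' := by
  induction ht with
  | refl => exact ⟨u, .refl, h⟩
  | tail _ hstep ih =>
    obtain ⟨u', hu', hBu'⟩ := ih
    rcases hB.2 _ _ hBu' none _ hstep with ⟨-, u'', h1, -, h3⟩ | ⟨ub, u'', h1, h2, -, h4⟩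
    · exact ⟨u'', hu'.trans h1, h3⟩
    · exact ⟨u'', (hu'.trans h1).tail h2, h4⟩

namespace SemiBrBisim

variable {s t : S}

theorem symm (h : SemiBrBisim tr s t) : SemiBrBisim tr t s :=
  let ⟨B, hB, hst⟩ := h
  ⟨B, hB, hB.1 hst⟩

theorem semiBrMatch {a : Option A} {s' : S} (h : SemiBrBisim tr s t) (hs : tr s a s') :
    SemiBrMatch tr (SemiBrBisim tr) s t a s' :=
  let ⟨B, hB, hst⟩ := h
  (hB.2 s t hst a s' hs).mono fun _ _ hB' => ⟨B, hB, hB'⟩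

theorem isSemiBrBisim : IsSemiBrBisim tr (SemiBrBisim tr) :=
  ⟨fun _ _ h => h.symm, fun _ _ h _ _ hs => h.semiBrMatch hs⟩

theorem trans {u : S} (hst : SemiBrBisim tr s t) (htu : SemiBrBisim tr t u) :
    SemiBrBisim tr s u := by
  let B : S → S → Prop := fun x z => ∃ y, SemiBrBisim tr x y ∧ SemiBrBisim tr y z
  refine ⟨B, ⟨fun x z ⟨y, hxy, hyz⟩ => ⟨y, hyz.symm, hxy.symm⟩, ?_⟩, t, hst, htu⟩
  rintro s1 s2 ⟨c, h1, h2⟩ a s1' hs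
  rcases h1.semiBrMatch hs with ⟨rfl, c', hc, h1c', h1'c'⟩ | ⟨cb, c', hc, hcb, h1cb, h1'c'⟩
  · obtain ⟨z', hz', hc'z'⟩ := isSemiBrBisim.exists_tauStar h2 hc
    exact .inl ⟨rfl, z', hz', ⟨c', h1c', hc'z'⟩, c', h1'c', hc'z'⟩
  · obtain ⟨zm, hzm, hcbzm⟩ := isSemiBrBisim.exists_tauStar h2 hc
    rcases hcbzm.semiBrMatch hcb with ⟨rfl, z', hz', hcbz', hc'z'⟩ |
      ⟨zb, z', hzb, hz, hcbzb, hc'z'⟩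
    · exact .inl ⟨rfl, z', hzm.trans hz', ⟨cb, h1cb, hcbz'⟩, c', h1'c', hc'z'⟩
    · exact .inr ⟨zb, z', hzm.trans hzb, hz, ⟨cb, h1cb, hcbzb⟩, c', h1'c', hc'z'⟩

theorem of_tauStar_between {v w : S} (hst : SemiBrBisim tr s t) (hsv : TauStar tr s v)
    (hvw : TauStar tr v w) (hwt : SemiBrBisim tr w t) : SemiBrBisim tr v t := by
  let B : S → S → Prop := fun x y => SemiBrBisim tr x y ∨ (x = v ∧ y = t) ∨ (x = t ∧ y = v)
  refine ⟨B, ⟨?_, ?_⟩, .inr (.inl ⟨rfl, rfl⟩)⟩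
  · rintro x y (h | ⟨rfl, rfl⟩ | ⟨rfl, rfl⟩)
    exacts [.inl h.symm, .inr (.inr ⟨rfl, rfl⟩), .inr (.inl ⟨rfl, rfl⟩)]
  · rintro s1 s2 (h | ⟨rfl, rfl⟩ | ⟨rfl, rfl⟩) a s1' hs
    · exact (h.semiBrMatch hs).mono fun _ _ => .inl
    · obtain ⟨t0, ht0, hvt0⟩ := isSemiBrBisim.exists_tauStar hst hsv
      exact ((hvt0.semiBrMatch hs).of_tauStar ht0).mono fun _ _ => .inl
    · exact ((hwt.symm.semiBrMatch hs).of_tauStar hvw).mono fun _ _ => .inl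

theorem isBranchingBisim : IsBranchingBisim tr (SemiBrBisim tr) := by
  refine ⟨fun _ _ h => h.symm, fun s1 s2 h a s1' hs => ?_⟩
  rcases h.semiBrMatch hs with ⟨rfl, s2', h2, h1, h1'⟩ | hmatch
  · rcases Relation.ReflTransGen.cases_tail h2 with rfl | ⟨u, hu, hstep⟩
    · exact .inl ⟨rfl, h1'⟩
    · have hu1 := of_tauStar_between h.symm hu (.single hstep) h1.symm
      exact .inr ⟨u, s2', hu, hstep, hu1.symm, h1'⟩
  · exact .inr hmatch

end SemiBrBisim

theorem brBisim_iff_semiBrBisim {s t : S} : BrBisim tr s t ↔ SemiBrBisim tr s t :=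
  ⟨fun ⟨B, hB, hst⟩ => ⟨B, hB.isSemiBrBisim, hst⟩,
    fun h => ⟨SemiBrBisim tr, SemiBrBisim.isBranchingBisim, h⟩⟩

namespace BrBisim

variable {s t : S}

theorem refl (s : S) : BrBisim tr s s := by
  refine ⟨Eq, ⟨fun _ _ h => h.symm, ?_⟩, rfl⟩
  rintro s1 _ rfl a s1' hs
  exact .inr ⟨s1, s1', .refl, hs, rfl, rfl⟩

theorem symm (h : BrBisim tr s t) : BrBisim tr t s :=
  let ⟨B, hB, hst⟩ := h
  ⟨B, hB, hB.1 hst⟩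

theorem trans {u : S} (hst : BrBisim tr s t) (htu : BrBisim tr t u) : BrBisim tr s u :=
  brBisim_iff_semiBrBisim.2 <|
    (brBisim_iff_semiBrBisim.1 hst).trans (brBisim_iff_semiBrBisim.1 htu)

theorem exists_tauStar {s' : S} (h : BrBisim tr s t) (hs : TauStar tr s s') :
    ∃ t', TauStar tr t t' ∧ BrBisim tr s' t' :=
  let ⟨B, hB, hst⟩ := h
  let ⟨t', ht, hB'⟩ := hB.isSemiBrBisim.exists_tauStar hst hs
  ⟨t', ht, B, hB, hB'⟩

end BrBisim

end SemiBranching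

/-- The steps of `p` that become τ-steps of `p / L`. -/
def HiddenTau (env : C → Proc A C) (L : Set A) (p q : Proc A C) : Prop :=
  Trans env p none q ∨ ∃ x ∈ L, Trans env p (some x) q

section Processes

variable {env : C → Proc A C}

theorem reflTransGen_hiddenTau_of_tauStar_hide {L : Set A} {p q : Proc A C}
    (h : TauStar (Trans env) (.hide p L) (.hide q L)) :
    Relation.ReflTransGen (HiddenTau env L) p q := by
  suffices ∀ s, TauStar (Trans env) (.hide p L) s →
      ∃ q, s = .hide q L ∧ Relation.ReflTransGen (HiddenTau env L) p q by
    obtain ⟨q', hq', hpq'⟩ := this _ h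
    cases hq'
    exact hpq'
  intro s hs
  induction hs with
  | refl => exact ⟨p, rfl, .refl⟩
  | tail _ hstep ih =>
    obtain ⟨q, rfl, hpq⟩ := ih
    cases hstep with
    | hideIn hq hx => exact ⟨_, rfl, hpq.tail (.inr ⟨_, hx, hq⟩)⟩
    | hideOut hq => exact ⟨_, rfl, hpq.tail (.inl hq)⟩

theorem exists_eq_restrict_of_tauStar {L : Set A} {p : Proc A C} {s : Proc A C}
    (h : TauStar (Trans env) (.restrict p L) s) : ∃ q, s = .restrict q L := by
  induction h with
  | refl => exact ⟨p, rfl⟩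
  | tail _ hstep ih =>
    obtain ⟨q, rfl⟩ := ih
    cases hstep
    exact ⟨_, rfl⟩

namespace SBrNDC

variable {AH : Set A} {P Q : Proc A C}

theorem of_reach (hP : SBrNDC env AH P) (h : Reach (Trans env) P Q) : SBrNDC env AH Q :=
  fun _ _ hQ => hP _ _ (Relation.ReflTransGen.trans h hQ)

theorem exists_tauStar_restrict {Q'' : Proc A C} (hQ : SBrNDC env AH Q)
    (h : Relation.ReflTransGen (HiddenTau env AH) Q Q'') :
    ∃ Phat, TauStar (Trans env) (.restrict Q AH) (.restrict Phat AH) ∧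
      BrBisim (Trans env) (.restrict Q'' AH) (.restrict Phat AH) := by
  induction h using Relation.ReflTransGen.head_induction_on with
  | refl => exact ⟨Q'', .refl, .refl _⟩
  | @head Q Q1 hstep _ ih =>
    have hQ1 : SBrNDC env AH Q1 := by
      refine hQ.of_reach (.single ?_)
      rcases hstep with hτ | ⟨x, -, hx⟩
      exacts [⟨none, hτ⟩, ⟨some x, hx⟩]
    obtain ⟨Phat1, hQ1Phat1, hPhat1⟩ := ih hQ1
    rcases hstep with hτ | ⟨x, hxAH, hx⟩
    · exact ⟨Phat1, .head (.res hτ fun _ h => nomatch h) hQ1Phat1, hPhat1⟩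
    · have hQQ1 := hQ Q Q1 .refl x hxAH hx
      obtain ⟨w, hQw, hPhat1w⟩ := hQQ1.symm.exists_tauStar hQ1Phat1
      obtain ⟨R, rfl⟩ := exists_eq_restrict_of_tauStar hQw
      exact ⟨R, hQw, hPhat1.trans hPhat1w⟩

end SBrNDC

end Processes

theorem sbrndc_tau_star_transfer_general {A C : Type} (env : C → Proc A C)
    (AH : Set A) (P : Proc A C)
    (hP : SBrNDC env AH P) (P' P'' : Proc A C)
    (hreach : Reach (Trans env) P P')
    (htau : TauStar (Trans env) (Proc.hide P' AH) (Proc.hide P'' AH)) :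
    ∃ Phat : Proc A C,
      TauStar (Trans env) (Proc.restrict P' AH) (Proc.restrict Phat AH) ∧
      BrBisim (Trans env) (Proc.restrict P'' AH) (Proc.restrict Phat AH) :=
  (hP.of_reach hreach).exists_tauStar_restrict (reflTransGen_hiddenTau_of_tauStar_hide htau)

/-- Lemma 4.6(1). -/
theorem sbrndc_tau_star_transfer {A C : Type} (env : C → Proc A C)
    (hguard : ∀ c, Guarded (env c)) (AH : Set A) (P : Proc A C)
    (hP : SBrNDC env AH P) (P' P'' : Proc A C)
    (hreach : Reach (Trans env) P P')
    (htau : TauStar (Trans env) (Proc.hide P' AH) (Proc.hide P'' AH)) :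
    ∃ Phat : Proc A C,
      TauStar (Trans env) (Proc.restrict P' AH) (Proc.restrict Phat AH) ∧
      BrBisim (Trans env) (Proc.restrict P'' AH) (Proc.restrict Phat AH) :=
  sbrndc_tau_star_transfer_general env AH P hP P' P'' hreach htau

end SecurityNI
end
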